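/- arXiv:2006.05399 — 9 statements merged into one kernel-verified Lean document; each statement's English description precedes it below -/
import Mathlib

section
/- Let m, μ, a, c > 0, set β = 6πμa/m, let v₀ ∈ ℝ, and let f : [0,∞) → ℝ be continuous with f(0) = 0. Define v(t) = v₀·e^{−βt} + f(ct)/m − (β/m)·e^{−βt}·∫₀ᵗ e^{βs} f(cs) ds. Then for every t ≥ 0, m·(v(t) − v₀) = f(ct) − 6πμa·∫₀ᵗ v(s) ds. -/
open Real intervalIntegral

/-- Wiener's 1921 integrated Newton's law: with `β = 6πμa/m`, `f` continuous on `[0,∞)`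
with `f 0 = 0`, and `v(t) = v₀·e^{−βt} + f(ct)/m − (β/m)·e^{−βt}·∫₀ᵗ e^{βs} f(cs) ds`,
we have `m·(v(t) − v₀) = f(ct) − 6πμa·∫₀ᵗ v(s) ds` for every `t ≥ 0`. -/
theorem wiener_1921_integrated_langevin (m μ a c v₀ β : ℝ)
    (hm : 0 < m) (hμ : 0 < μ) (ha : 0 < a) (hc : 0 < c)
    (hβ : β = 6 * π * μ * a / m)
    (f : ℝ → ℝ) (hf : ContinuousOn f (Set.Ici 0)) (hf0 : f 0 = 0)
    (v : ℝ → ℝ)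
    (hv : ∀ t : ℝ, v t = v₀ * Real.exp (-β * t) + f (c * t) / m
        - β / m * Real.exp (-β * t) * ∫ s in (0:ℝ)..t, Real.exp (β * s) * f (c * s)) :
    ∀ t : ℝ, 0 ≤ t →
      m * (v t - v₀) = f (c * t) - 6 * π * μ * a * ∫ s in (0:ℝ)..t, v s := by
  intro t ht
  have hβpos : 0 < β := by
    rw [hβ]
    positivity
  -- modified integrand, continuous on all of ℝ
  set g : ℝ → ℝ := fun s => Real.exp (β * s) * f (c * max s 0) with hg
  have hfm : Continuous (fun s : ℝ => f (c * max s 0)) := by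
    apply hf.comp_continuous (by continuity)
    intro x
    have : 0 ≤ max x 0 := le_max_right _ _
    exact Set.mem_Ici.mpr (by positivity)
  have hec : Continuous fun s : ℝ => Real.exp (β * s) :=
    Real.continuous_exp.comp (continuous_const.mul continuous_id)
  have hec' : Continuous fun s : ℝ => Real.exp (-β * s) :=
    Real.continuous_exp.comp (continuous_const.mul continuous_id)
  have hgc : Continuous g := hec.mul hfm
  set G : ℝ → ℝ := fun s => ∫ u in (0:ℝ)..s, g u with hG
  have hGd : ∀ s : ℝ, HasDerivAt G (g s) s := fun s =>
    intervalIntegral.integral_hasDerivAt_right (hgc.intervalIntegrable 0 s)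
      hgc.aestronglyMeasurable.stronglyMeasurableAtFilter hgc.continuousAt
  -- for s ≥ 0, G s agrees with the integral in hv
  have hGeq : ∀ s : ℝ, 0 ≤ s →
      G s = ∫ u in (0:ℝ)..s, Real.exp (β * u) * f (c * u) := by
    intro s hs
    apply intervalIntegral.integral_congr
    intro u hu
    rw [Set.uIcc_of_le hs] at hu
    simp [hg, max_eq_left hu.1]
  -- V : continuous version of v
  set V : ℝ → ℝ := fun s => v₀ * Real.exp (-β * s) + f (c * max s 0) / m
      - β / m * Real.exp (-β * s) * G s with hV
  have hVc : Continuous V := by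
    have hGc : Continuous G :=
      continuous_iff_continuousAt.mpr fun s => (hGd s).continuousAt
    exact ((continuous_const.mul hec').add (hfm.div_const m)).sub
      ((continuous_const.mul hec').mul hGc)
  -- antiderivative
  set F : ℝ → ℝ := fun s => -(v₀ / β) * Real.exp (-β * s)
      + (1 / m) * (Real.exp (-β * s) * G s) with hF
  have hFd : ∀ s : ℝ, HasDerivAt F (V s) s := by
    intro s
    have h1 : HasDerivAt (fun s => Real.exp (-β * s)) (-β * Real.exp (-β * s)) s := by
      simpa [mul_comm] using ((hasDerivAt_id s).const_mul (-β)).exp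
    have h2 : HasDerivAt (fun s => Real.exp (-β * s) * G s)
        (-β * Real.exp (-β * s) * G s + Real.exp (-β * s) * g s) s := h1.mul (hGd s)
    have h3 := ((h1.const_mul (-(v₀ / β))).add (h2.const_mul (1 / m)))
    refine h3.congr_deriv ?_
    symm
    have hexp : Real.exp (-β * s) * Real.exp (β * s) = 1 := by
      rw [← Real.exp_add]; ring_nf; exact Real.exp_zero
    have : Real.exp (-β * s) * g s = f (c * max s 0) := by
      simp only [hg]
      calc Real.exp (-β * s) * (Real.exp (β * s) * f (c * max s 0))
          = (Real.exp (-β * s) * Real.exp (β * s)) * f (c * max s 0) := by ring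
        _ = f (c * max s 0) := by rw [hexp]; ring
    simp only [hV]
    rw [this]
    field_simp
    ring
  have hFTC : ∫ s in (0:ℝ)..t, V s = F t - F 0 :=
    intervalIntegral.integral_eq_sub_of_hasDerivAt (fun s _ => hFd s)
      (hVc.intervalIntegrable 0 t)
  have hint : ∫ s in (0:ℝ)..t, v s = F t - F 0 := by
    rw [← hFTC]
    apply intervalIntegral.integral_congr
    intro s hs
    rw [Set.uIcc_of_le ht] at hs
    rw [hv s, hV]
    simp only
    rw [max_eq_left hs.1, hGeq s hs.1]
  rw [hint, hv t]
  have hG0 : G 0 = 0 := by simp [hG]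
  have hmβ : 6 * π * μ * a = m * β := by
    rw [hβ]; field_simp
  rw [hmβ, hF]
  simp only [hG0, mul_zero, Real.exp_zero]
  rw [hGeq t ht]
  field_simp
  ring
end

section
/- Let m, c, β > 0 and v₀ ∈ ℝ, and define A(t) = (v₀²/β²)·(1−e^{−βt})² + (c/(4m²β³))·(2βt − 3 + 4e^{−βt} − e^{−2βt}). Then for every t > 0, |A(t)/t − c/(2m²β²)| ≤ (1/t)·( v₀²/β² + 3c/(4m²β³) ). -/
open Real

/-- Wiener's 1921 bound on the deviation of the mean square displacement from Einstein's
value: with `A(t) = (v₀²/β²)(1−e^{−βt})² + (c/(4m²β³))(2βt − 3 + 4e^{−βt} − e^{−2βt})`,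
for every `t > 0`,
`|A(t)/t − c/(2m²β²)| ≤ (1/t)(v₀²/β² + 3c/(4m²β³))`. -/
theorem wiener_1921_relative_error_bound (m c β v₀ : ℝ)
    (hm : 0 < m) (hc : 0 < c) (hβ : 0 < β)
    (A : ℝ → ℝ)
    (hA : ∀ t : ℝ, A t = v₀ ^ 2 / β ^ 2 * (1 - Real.exp (-β * t)) ^ 2
        + c / (4 * m ^ 2 * β ^ 3) *
            (2 * β * t - 3 + 4 * Real.exp (-β * t) - Real.exp (-2 * β * t))) :
    ∀ t : ℝ, 0 < t →
      |A t / t - c / (2 * m ^ 2 * β ^ 2)|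
        ≤ 1 / t * (v₀ ^ 2 / β ^ 2 + 3 * c / (4 * m ^ 2 * β ^ 3)) := by
  intro t ht
  have h2 : Real.exp (-2 * β * t) = Real.exp (-β * t) ^ 2 := by
    rw [show (-2 * β * t) = (-β * t) + (-β * t) by ring, Real.exp_add, sq]
  have E := hA t
  rw [h2] at E
  have hu0 : 0 < Real.exp (-β * t) := Real.exp_pos _
  have hu1 : Real.exp (-β * t) ≤ 1 := Real.exp_le_one_iff.mpr (by nlinarith)
  generalize hg : Real.exp (-β * t) = u at E hu0 hu1
  have ht' : t ≠ 0 := ne_of_gt ht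
  have hβ' : β ≠ 0 := ne_of_gt hβ
  have hm' : m ≠ 0 := ne_of_gt hm
  have key : A t / t - c / (2 * m ^ 2 * β ^ 2)
      = 1 / t * (v₀ ^ 2 / β ^ 2 * (1 - u) ^ 2
        + c / (4 * m ^ 2 * β ^ 3) * (-3 + 4 * u - u ^ 2)) := by
    rw [E]; field_simp; ring
  rw [key, abs_mul, abs_of_pos (by positivity : (0:ℝ) < 1 / t)]
  apply mul_le_mul_of_nonneg_left _ (by positivity)
  have hP : (0:ℝ) ≤ v₀ ^ 2 / β ^ 2 := by positivity
  have hQ : (0:ℝ) ≤ c / (4 * m ^ 2 * β ^ 3) := by positivity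
  rw [show 3 * c / (4 * m ^ 2 * β ^ 3) = 3 * (c / (4 * m ^ 2 * β ^ 3)) by ring]
  generalize v₀ ^ 2 / β ^ 2 = P at hP ⊢
  generalize c / (4 * m ^ 2 * β ^ 3) = Q at hQ ⊢
  rw [abs_le]
  constructor
  · nlinarith [mul_nonneg hP (sq_nonneg (1 - u)),
      mul_nonneg hQ (mul_nonneg hu0.le (by linarith : (0:ℝ) ≤ 4 - u))]
  · nlinarith [mul_nonneg hP (mul_nonneg hu0.le (by linarith : (0:ℝ) ≤ 2 - u)),
      mul_nonneg hQ (mul_nonneg (by linarith : (0:ℝ) ≤ 1 - u) (by linarith : (0:ℝ) ≤ 3 - u))]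
end

section
/- Let (Ω, P) be a probability space, D > 0, and let B : [0,1] → Ω → ℝ be a process such that B 0 = 0 almost surely, for any 0 ≤ t₀ ≤ t₁ ≤ ⋯ ≤ t_k ≤ 1 the increments B t₁ − B t₀, …, B t_k − B t_{k−1} are independent, and for s ≤ t the increment B t − B s has law gaussianReal 0 (D·(t−s)). Then for every δ > 0, P( | Σ_{k=1}^n ( B(k/n) − B((k−1)/n) )² − D | > δ ) → 0 as n → ∞. -/
open MeasureTheory ProbabilityTheory Filter Real
open scoped NNReal ENNReal

namespace WienerQV

lemma integrable_pow_mul_gauss {b : ℝ} (hb : 0 < b) (n : ℕ) :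
    Integrable fun x : ℝ => x ^ n * Real.exp (-b * x ^ 2) := by
  have h := integrable_rpow_mul_exp_neg_mul_sq hb
    (s := (n : ℝ)) (lt_of_lt_of_le neg_one_lt_zero (Nat.cast_nonneg n))
  simpa [Real.rpow_natCast] using h

lemma gauss_rec {b : ℝ} (hb : 0 < b) (n : ℕ) :
    ∫ x : ℝ, x ^ (n + 2) * Real.exp (-b * x ^ 2) =
      ((n : ℝ) + 1) / (2 * b) * ∫ x : ℝ, x ^ n * Real.exp (-b * x ^ 2) := by
  have hder : ∀ x : ℝ, HasDerivAt (fun x : ℝ => x ^ (n + 1) * Real.exp (-b * x ^ 2))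
      (((n : ℝ) + 1) * (x ^ n * Real.exp (-b * x ^ 2))
        - (2 * b) * (x ^ (n + 2) * Real.exp (-b * x ^ 2))) x := by
    intro x
    have h1 : HasDerivAt (fun x : ℝ => x ^ (n + 1)) (((n : ℝ) + 1) * x ^ n) x := by
      simpa using hasDerivAt_pow (n + 1) x
    have h2 : HasDerivAt (fun x : ℝ => Real.exp (-b * x ^ 2))
        (Real.exp (-b * x ^ 2) * (-b * (2 * x))) x := by
      have h3 : HasDerivAt (fun x : ℝ => -b * x ^ 2) (-b * (2 * x)) x := by
        simpa using (hasDerivAt_pow 2 x).const_mul (-b)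
      exact h3.exp
    refine (h1.mul h2).congr_deriv ?_
    ring
  have hint : Integrable (fun x : ℝ =>
      ((n : ℝ) + 1) * (x ^ n * Real.exp (-b * x ^ 2))
        - (2 * b) * (x ^ (n + 2) * Real.exp (-b * x ^ 2))) := by
    exact ((integrable_pow_mul_gauss hb n).const_mul _).sub
      ((integrable_pow_mul_gauss hb (n + 2)).const_mul _)
  have h0 := integral_eq_zero_of_hasDerivAt_of_integrable hder hint
    (integrable_pow_mul_gauss hb (n + 1))
  rw [integral_sub ((integrable_pow_mul_gauss hb n).const_mul _)
      ((integrable_pow_mul_gauss hb (n + 2)).const_mul _),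
    integral_const_mul, integral_const_mul, sub_eq_zero] at h0
  rw [div_mul_eq_mul_div, eq_div_iff (by positivity : (2 * b) ≠ 0)]
  linarith [h0]

lemma gauss_two {b : ℝ} (hb : 0 < b) :
    ∫ x : ℝ, x ^ 2 * Real.exp (-b * x ^ 2) = Real.sqrt (π / b) / (2 * b) := by
  have h := gauss_rec hb 0
  simp only [pow_zero, one_mul, Nat.cast_zero, zero_add] at h
  rw [h, integral_gaussian]
  ring

lemma gauss_four {b : ℝ} (hb : 0 < b) :
    ∫ x : ℝ, x ^ 4 * Real.exp (-b * x ^ 2) = 3 * Real.sqrt (π / b) / (2 * b) ^ 2 := by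
  have h := gauss_rec hb 2
  rw [gauss_two hb] at h
  rw [h]
  field_simp
  ring


lemma integral_gaussianReal_eq (v : ℝ≥0) (hv : v ≠ 0) (g : ℝ → ℝ) :
    ∫ x, g x ∂(gaussianReal 0 v) = ∫ x, gaussianPDFReal 0 v x * g x := by
  rw [gaussianReal_of_var_ne_zero 0 hv]
  have h1 : (volume : Measure ℝ).withDensity (gaussianPDF 0 v)
      = (volume : Measure ℝ).withDensity
        (fun x => ((gaussianPDFReal 0 v x).toNNReal : ℝ≥0∞)) := rfl
  rw [h1, integral_withDensity_eq_integral_smul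
    (measurable_gaussianPDFReal 0 v).real_toNNReal g]
  congr 1
  ext x
  simp [NNReal.smul_def, Real.coe_toNNReal _ (gaussianPDFReal_nonneg 0 v x)]

lemma pdf_eq (v : ℝ≥0) (x : ℝ) (g : ℝ) :
    gaussianPDFReal 0 v x * g
      = (Real.sqrt (2 * π * v))⁻¹ * (g * Real.exp (-(2 * (v : ℝ))⁻¹ * x ^ 2)) := by
  rw [gaussianPDFReal]
  rw [show -(x - 0) ^ 2 / (2 * (v : ℝ)) = -(2 * (v : ℝ))⁻¹ * x ^ 2 by ring]
  ring

lemma integral_sq_gaussianReal (v : ℝ≥0) : ∫ x, x ^ 2 ∂(gaussianReal 0 v) = v := by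
  by_cases hv : v = 0
  · simp [hv, gaussianReal_zero_var]
  · have hvpos : 0 < (v : ℝ) := lt_of_le_of_ne v.coe_nonneg (by exact_mod_cast (Ne.symm hv))
    have hb : 0 < (2 * (v : ℝ))⁻¹ := by positivity
    rw [integral_gaussianReal_eq v hv]
    simp_rw [pdf_eq v]
    rw [integral_const_mul, gauss_two hb]
    rw [show π / (2 * (v : ℝ))⁻¹ = 2 * π * v by field_simp]
    have hX : Real.sqrt (2 * π * (v : ℝ)) ≠ 0 := by positivity
    field_simp

lemma integral_four_gaussianReal (v : ℝ≥0) :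
    ∫ x, x ^ 4 ∂(gaussianReal 0 v) = 3 * (v : ℝ) ^ 2 := by
  by_cases hv : v = 0
  · simp [hv, gaussianReal_zero_var]
  · have hvpos : 0 < (v : ℝ) := lt_of_le_of_ne v.coe_nonneg (by exact_mod_cast (Ne.symm hv))
    have hb : 0 < (2 * (v : ℝ))⁻¹ := by positivity
    rw [integral_gaussianReal_eq v hv]
    simp_rw [pdf_eq v]
    rw [integral_const_mul, gauss_four hb]
    rw [show π / (2 * (v : ℝ))⁻¹ = 2 * π * v by field_simp]
    have hX : Real.sqrt (2 * π * (v : ℝ)) ≠ 0 := by positivity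
    field_simp

lemma integrable_pow_gaussianReal (v : ℝ≥0) (n : ℕ) :
    Integrable (fun x : ℝ => x ^ n) (gaussianReal 0 v) := by
  by_cases hv : v = 0
  · rw [hv, gaussianReal_zero_var]
    exact (integrable_const ((0:ℝ) ^ n)).congr (ae_eq_dirac fun x : ℝ => x ^ n).symm
  · have hvpos : 0 < (v : ℝ) := lt_of_le_of_ne v.coe_nonneg (by exact_mod_cast (Ne.symm hv))
    have hb : 0 < (2 * (v : ℝ))⁻¹ := by positivity
    rw [gaussianReal_of_var_ne_zero 0 hv]
    have h1 : (volume : Measure ℝ).withDensity (gaussianPDF 0 v)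
        = (volume : Measure ℝ).withDensity
          (fun x => ((gaussianPDFReal 0 v x).toNNReal : ℝ≥0∞)) := rfl
    rw [h1, integrable_withDensity_iff_integrable_smul
      (measurable_gaussianPDFReal 0 v).real_toNNReal]
    have heq : (fun x : ℝ => (gaussianPDFReal 0 v x).toNNReal • x ^ n)
        = fun x : ℝ => (Real.sqrt (2 * π * v))⁻¹ * (x ^ n * Real.exp (-(2 * (v : ℝ))⁻¹ * x ^ 2)) := by
      ext x
      rw [NNReal.smul_def, smul_eq_mul, Real.coe_toNNReal _ (gaussianPDFReal_nonneg 0 v x),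
        pdf_eq v]
    rw [heq]
    exact (integrable_pow_mul_gauss hb n).const_mul _

section Moments

variable {Ω : Type*} [MeasurableSpace Ω]

lemma aemeasurable_of_map_gaussian {P : Measure Ω} {X : Ω → ℝ} {v : ℝ≥0}
    (h : Measure.map X P = gaussianReal 0 v) : AEMeasurable X P := by
  by_contra hX
  rw [Measure.map_of_not_aemeasurable hX] at h
  exact (IsProbabilityMeasure.ne_zero (gaussianReal 0 v)) h.symm

lemma sq_moments {P : Measure Ω} [IsProbabilityMeasure P] {X : Ω → ℝ} {v : ℝ≥0}
    (h : Measure.map X P = gaussianReal 0 v) :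
    MemLp (fun ω => X ω ^ 2) 2 P ∧ (∫ ω, X ω ^ 2 ∂P) = (v : ℝ) ∧
      variance (fun ω => X ω ^ 2) P = 2 * (v : ℝ) ^ 2 := by
  have hXm : AEMeasurable X P := aemeasurable_of_map_gaussian h
  have hint : ∀ m : ℕ, Integrable (fun ω => X ω ^ m) P := by
    intro m
    have h1 : Integrable (fun x : ℝ => x ^ m) (Measure.map X P) := by
      rw [h]; exact integrable_pow_gaussianReal v m
    exact (integrable_map_measure ((measurable_id'.pow_const m).aestronglyMeasurable) hXm).mp h1
  have hI : ∀ m : ℕ, (∫ ω, X ω ^ m ∂P) = ∫ x, x ^ m ∂(gaussianReal 0 v) := by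
    intro m
    rw [← h, integral_map hXm ((measurable_id'.pow_const m).aestronglyMeasurable)]
  have h2 : (∫ ω, X ω ^ 2 ∂P) = (v : ℝ) := by rw [hI 2, integral_sq_gaussianReal]
  have h4 : (∫ ω, X ω ^ 4 ∂P) = 3 * (v : ℝ) ^ 2 := by rw [hI 4, integral_four_gaussianReal]
  have hmem : MemLp (fun ω => X ω ^ 2) 2 P := by
    rw [memLp_two_iff_integrable_sq (by exact (hXm.pow_const 2).aestronglyMeasurable)]
    have : (fun ω => (X ω ^ 2) ^ 2) = fun ω => X ω ^ 4 := by ext ω; ring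
    rw [this]; exact hint 4
  refine ⟨hmem, h2, ?_⟩
  rw [variance_eq_sub hmem]
  simp only [Pi.pow_apply]
  have : (fun ω => (X ω ^ 2) ^ 2) = fun ω => X ω ^ 4 := by ext ω; ring
  rw [this, h4, h2]
  ring

end Moments

end WienerQV

open WienerQV Real

/-- Wiener's 1923 concentration of the quadratic variation: if `B` is a process on `[0,1]`
with `B 0 = 0` a.s., independent increments, and Gaussian increments
`B t − B s ∼ N(0, D(t−s))`, then for every `δ > 0`,
`P(|Σ_{k=1}^n (B(k/n) − B((k−1)/n))² − D| > δ) → 0` as `n → ∞`. -/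
theorem quadratic_variation_tendsto_in_probability
    {Ω : Type*} [MeasurableSpace Ω] (P : Measure Ω) [IsProbabilityMeasure P]
    (D : ℝ) (hD : 0 < D) (B : ℝ → Ω → ℝ)
    (h0 : ∀ᵐ ω ∂P, B 0 ω = 0)
    (hindep : ∀ (k : ℕ) (t : ℕ → ℝ), Monotone t → (∀ i, t i ∈ Set.Icc (0:ℝ) 1) →
      iIndepFun
        (fun i : Fin k => fun ω => B (t (i + 1)) ω - B (t i) ω) P)
    (hlaw : ∀ s t : ℝ, 0 ≤ s → s ≤ t → t ≤ 1 →
      Measure.map (fun ω => B t ω - B s ω) P = gaussianReal 0 (Real.toNNReal (D * (t - s)))) :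
    ∀ δ : ℝ, 0 < δ →
      Tendsto (fun n : ℕ =>
          P {ω | δ < |(∑ k ∈ Finset.range n,
              (B ((k + 1 : ℕ) / (n : ℝ)) ω - B ((k : ℕ) / (n : ℝ)) ω) ^ 2) - D|})
        atTop (nhds 0) := by
  intro δ hδ
  have key : ∀ n : ℕ, 1 ≤ n →
      P {ω | δ < |(∑ k ∈ Finset.range n,
          (B ((k + 1 : ℕ) / (n : ℝ)) ω - B ((k : ℕ) / (n : ℝ)) ω) ^ 2) - D|}
        ≤ ENNReal.ofReal ((2 * D ^ 2 / δ ^ 2) / n) := by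
    intro n hn
    have hn0 : (0 : ℝ) < n := by exact_mod_cast hn
    set v : ℝ≥0 := Real.toNNReal (D / n) with hv
    have hvco : (v : ℝ) = D / n := Real.coe_toNNReal _ (div_pos hD hn0).le
    -- the increments
    set Y : ℕ → Ω → ℝ := fun k ω =>
      (B ((k + 1 : ℕ) / (n : ℝ)) ω - B ((k : ℕ) / (n : ℝ)) ω) ^ 2 with hY
    -- law of the increments
    have hlawk : ∀ k : ℕ, k < n →
        Measure.map (fun ω => B ((k + 1 : ℕ) / (n : ℝ)) ω - B ((k : ℕ) / (n : ℝ)) ω) P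
          = gaussianReal 0 v := by
      intro k hk
      have hk1 : ((k + 1 : ℕ) : ℝ) ≤ n := by exact_mod_cast hk
      have h1 : (0 : ℝ) ≤ (k : ℕ) / (n : ℝ) := by positivity
      have h2 : ((k : ℕ) : ℝ) / (n : ℝ) ≤ ((k + 1 : ℕ) : ℝ) / (n : ℝ) := by
        apply (div_le_div_iff_of_pos_right hn0).mpr
        push_cast; linarith
      have h3 : ((k + 1 : ℕ) : ℝ) / (n : ℝ) ≤ 1 := by
        rw [div_le_one hn0]; exact hk1
      have := hlaw _ _ h1 h2 h3
      rw [this]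
      congr 1
      rw [hv]
      congr 1
      push_cast
      field_simp
      ring
    -- moments
    have hmom := fun (k : ℕ) (hk : k < n) => sq_moments (P := P) (hlawk k hk)
    have hmemk : ∀ k ∈ Finset.range n, MemLp (Y k) 2 P := fun k hk =>
      (hmom k (Finset.mem_range.mp hk)).1
    -- independence
    have ht : Monotone (fun i : ℕ => ((min i n : ℕ) : ℝ) / n) := by
      intro a b hab
      apply (div_le_div_iff_of_pos_right hn0).mpr
      exact_mod_cast min_le_min hab le_rfl
    have hmem01 : ∀ i : ℕ, ((min i n : ℕ) : ℝ) / n ∈ Set.Icc (0 : ℝ) 1 := by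
      intro i
      constructor
      · positivity
      · rw [div_le_one hn0]; exact_mod_cast min_le_right i n
    have hI := hindep n (fun i : ℕ => ((min i n : ℕ) : ℝ) / n) ht hmem01
    have hfun : (fun i : Fin n => fun ω =>
          B (((min ((i : ℕ) + 1) n : ℕ) : ℝ) / n) ω - B (((min (i : ℕ) n : ℕ) : ℝ) / n) ω)
        = fun i : Fin n => fun ω =>
          B (((i : ℕ) + 1 : ℕ) / (n : ℝ)) ω - B (((i : ℕ) : ℕ) / (n : ℝ)) ω := by
      funext i ω
      rw [min_eq_left (Nat.succ_le_of_lt i.isLt), min_eq_left i.isLt.le]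
    rw [hfun] at hI
    have hSq := hI.comp (fun _ => fun x : ℝ => x ^ 2) (fun _ => measurable_id.pow_const 2)
    have hpair : Set.Pairwise ↑(Finset.range n) fun i j => IndepFun (Y i) (Y j) P := by
      intro i hi j hj hij
      have hi' : i < n := Finset.mem_range.mp (by simpa using hi)
      have hj' : j < n := Finset.mem_range.mp (by simpa using hj)
      exact hSq.indepFun (i := ⟨i, hi'⟩) (j := ⟨j, hj'⟩) (by simpa using hij)
    -- mean and variance of the sum
    have hmean : (∫ ω, (∑ k ∈ Finset.range n, Y k) ω ∂P) = D := by
      simp only [Finset.sum_apply]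
      rw [integral_finset_sum _ (fun k hk =>
        ((hmemk k hk).integrable one_le_two))]
      have : ∀ k ∈ Finset.range n, (∫ ω, Y k ω ∂P) = (v : ℝ) := fun k hk =>
        (hmom k (Finset.mem_range.mp hk)).2.1
      rw [Finset.sum_congr rfl this, Finset.sum_const, Finset.card_range, nsmul_eq_mul, hvco]
      field_simp
    have hvar : variance (∑ k ∈ Finset.range n, Y k) P = 2 * D ^ 2 / n := by
      rw [IndepFun.variance_sum hmemk hpair]
      have : ∀ k ∈ Finset.range n, variance (Y k) P = 2 * (v : ℝ) ^ 2 := fun k hk =>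
        (hmom k (Finset.mem_range.mp hk)).2.2
      rw [Finset.sum_congr rfl this, Finset.sum_const, Finset.card_range, nsmul_eq_mul, hvco]
      field_simp
    have hmemS : MemLp (∑ k ∈ Finset.range n, Y k) 2 P := memLp_finset_sum' _ hmemk
    have cheb := meas_ge_le_variance_div_sq (μ := P) hmemS hδ
    rw [hvar] at cheb
    have hsub : {ω | δ < |(∑ k ∈ Finset.range n,
          (B ((k + 1 : ℕ) / (n : ℝ)) ω - B ((k : ℕ) / (n : ℝ)) ω) ^ 2) - D|}
        ⊆ {ω | δ ≤ |(∑ k ∈ Finset.range n, Y k) ω - P[∑ k ∈ Finset.range n, Y k]|} := by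
      intro ω hω
      simp only [Set.mem_setOf_eq] at hω ⊢
      rw [hmean, Finset.sum_apply]
      exact le_of_lt hω
    refine le_trans (measure_mono hsub) (le_trans cheb ?_)
    rw [show 2 * D ^ 2 / (n : ℝ) / δ ^ 2 = 2 * D ^ 2 / δ ^ 2 / n by ring]
  -- conclude by squeezing
  have hbound : Tendsto (fun n : ℕ => ENNReal.ofReal ((2 * D ^ 2 / δ ^ 2) / n))
      atTop (nhds 0) := by
    rw [show (0 : ℝ≥0∞) = ENNReal.ofReal 0 by simp]
    exact (ENNReal.continuous_ofReal.tendsto 0).comp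
      (tendsto_const_div_atTop_nhds_zero_nat _)
  refine tendsto_of_tendsto_of_tendsto_of_le_of_le' tendsto_const_nhds hbound
    (Eventually.of_forall fun n => zero_le) ?_
  filter_upwards [eventually_ge_atTop 1] with n hn using key n hn
end

section
/- Let f : [0,1] → ℝ be continuous and of bounded variation on [0,1]. Then Σ_{k=1}^n ( f(k/n) − f((k−1)/n) )² → 0 as n → ∞. -/
open Filter

/-- Wiener's 1923 deterministic lemma: a continuous function of bounded variation on `[0,1]`
has vanishing quadratic variation along the uniform partitions:
`Σ_{k=1}^n (f(k/n) − f((k−1)/n))² → 0` as `n → ∞`. -/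
theorem quadratic_variation_tendsto_zero_of_continuous_of_boundedVariation
    (f : ℝ → ℝ) (hcont : ContinuousOn f (Set.Icc 0 1))
    (hbv : BoundedVariationOn f (Set.Icc 0 1)) :
    Tendsto (fun n : ℕ =>
        ∑ k ∈ Finset.range n, (f ((k + 1 : ℕ) / (n : ℝ)) - f ((k : ℕ) / (n : ℝ))) ^ 2)
      atTop (nhds 0) := by
  have hV : eVariationOn f (Set.Icc 0 1) ≠ ⊤ := hbv
  set V := (eVariationOn f (Set.Icc 0 1)).toReal with hVdef
  have hV0 : 0 ≤ V := ENNReal.toReal_nonneg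
  -- the sum of absolute increments is bounded by the total variation
  have key : ∀ n : ℕ, 0 < n →
      ∑ k ∈ Finset.range n, |f ((k + 1 : ℕ) / (n : ℝ)) - f ((k : ℕ) / (n : ℝ))| ≤ V := by
    intro n hn
    have hn' : (0:ℝ) < n := by exact_mod_cast hn
    set u : ℕ → ℝ := fun i => (min i n : ℕ) / n with hu_def
    have hu : Monotone u := by
      intro a b hab
      have : ((min a n : ℕ) : ℝ) ≤ ((min b n : ℕ) : ℝ) := by
        exact_mod_cast min_le_min hab le_rfl
      exact div_le_div_of_nonneg_right this hn'.le |>.trans_eq rfl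
    have us : ∀ i, u i ∈ Set.Icc (0:ℝ) 1 := by
      intro i
      constructor
      · positivity
      · rw [div_le_one hn']
        exact_mod_cast min_le_right i n
    have hsum := eVariationOn.sum_le (f := f) (n := n) hu us
    have heq : ∀ k ∈ Finset.range n,
        edist (f (u (k+1))) (f (u k)) =
          ENNReal.ofReal (|f ((k + 1 : ℕ) / (n : ℝ)) - f ((k : ℕ) / (n : ℝ))|) := by
      intro k hk
      have hk' : k < n := Finset.mem_range.mp hk
      have h1 : u k = (k : ℕ) / (n : ℝ) := by
        show ((min k n : ℕ) : ℝ) / n = _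
        rw [min_eq_left hk'.le]
      have h2 : u (k+1) = ((k+1 : ℕ) : ℝ) / (n : ℝ) := by
        show ((min (k+1) n : ℕ) : ℝ) / n = _
        rw [min_eq_left (Nat.succ_le_of_lt hk')]
      rw [h1, h2, edist_dist, Real.dist_eq]
    rw [Finset.sum_congr rfl heq] at hsum
    rw [← ENNReal.ofReal_sum_of_nonneg (fun k _ => abs_nonneg _)] at hsum
    have := ENNReal.toReal_mono hV hsum
    rwa [ENNReal.toReal_ofReal (Finset.sum_nonneg fun k _ => abs_nonneg _)] at this
  -- uniform continuity
  have hucont : UniformContinuousOn f (Set.Icc 0 1) :=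
    isCompact_Icc.uniformContinuousOn_of_continuous hcont
  rw [Metric.tendsto_atTop]
  intro ε hε
  have hε' : 0 < ε / (V + 1) := by positivity
  obtain ⟨δ, hδ, hδf⟩ := Metric.uniformContinuousOn_iff.mp hucont (ε / (V + 1)) hε'
  obtain ⟨N, hN⟩ := exists_nat_gt (1 / δ)
  refine ⟨N + 1, fun n hn => ?_⟩
  have hn0 : 0 < n := lt_of_lt_of_le (Nat.succ_pos N) hn
  have hn' : (0:ℝ) < n := by exact_mod_cast hn0
  have hinv : 1 / (n : ℝ) < δ := by
    rw [div_lt_iff₀ hn']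
    rw [div_lt_iff₀ hδ] at hN
    calc (1:ℝ) < N * δ := hN
    _ ≤ n * δ := by
        have : (N:ℝ) ≤ n := by exact_mod_cast (Nat.le_succ N).trans hn
        nlinarith
    _ = δ * n := by ring
  have hmem : ∀ k : ℕ, k ≤ n → ((k:ℕ):ℝ) / n ∈ Set.Icc (0:ℝ) 1 := by
    intro k hk
    constructor
    · positivity
    · rw [div_le_one hn']; exact_mod_cast hk
  have hsmall : ∀ k ∈ Finset.range n,
      |f ((k + 1 : ℕ) / (n : ℝ)) - f ((k : ℕ) / (n : ℝ))| ≤ ε / (V + 1) := by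
    intro k hk
    have hk' : k < n := Finset.mem_range.mp hk
    have h1 := hmem (k+1) (Nat.succ_le_of_lt hk')
    have h2 := hmem k hk'.le
    have hd : dist (((k+1 : ℕ):ℝ) / n) (((k:ℕ):ℝ) / n) < δ := by
      rw [Real.dist_eq]
      have : ((k+1 : ℕ):ℝ) / n - ((k:ℕ):ℝ) / n = 1 / n := by
        push_cast; field_simp; ring
      rw [this, abs_of_pos (by positivity)]
      exact hinv
    have := hδf _ h1 _ h2 hd
    rw [Real.dist_eq] at this
    exact this.le
  have hbound : ∑ k ∈ Finset.range n, (f ((k + 1 : ℕ) / (n : ℝ)) - f ((k : ℕ) / (n : ℝ))) ^ 2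
      ≤ ε / (V + 1) * V := by
    calc ∑ k ∈ Finset.range n, (f ((k + 1 : ℕ) / (n : ℝ)) - f ((k : ℕ) / (n : ℝ))) ^ 2
        ≤ ∑ k ∈ Finset.range n,
            ε / (V + 1) * |f ((k + 1 : ℕ) / (n : ℝ)) - f ((k : ℕ) / (n : ℝ))| := by
          apply Finset.sum_le_sum
          intro k hk
          calc (f ((k + 1 : ℕ) / (n : ℝ)) - f ((k : ℕ) / (n : ℝ))) ^ 2
              = |f ((k + 1 : ℕ) / (n : ℝ)) - f ((k : ℕ) / (n : ℝ))| *
                |f ((k + 1 : ℕ) / (n : ℝ)) - f ((k : ℕ) / (n : ℝ))| := by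
                rw [abs_mul_abs_self, sq]
            _ ≤ ε / (V + 1) * |f ((k + 1 : ℕ) / (n : ℝ)) - f ((k : ℕ) / (n : ℝ))| :=
                mul_le_mul_of_nonneg_right (hsmall k hk) (abs_nonneg _)
      _ = ε / (V + 1) * ∑ k ∈ Finset.range n,
            |f ((k + 1 : ℕ) / (n : ℝ)) - f ((k : ℕ) / (n : ℝ))| := by
          rw [Finset.mul_sum]
      _ ≤ ε / (V + 1) * V :=
          mul_le_mul_of_nonneg_left (key n hn0) hε'.le
  have hnonneg : 0 ≤ ∑ k ∈ Finset.range n,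
      (f ((k + 1 : ℕ) / (n : ℝ)) - f ((k : ℕ) / (n : ℝ))) ^ 2 :=
    Finset.sum_nonneg fun k _ => sq_nonneg _
  rw [Real.dist_eq, sub_zero, abs_of_nonneg hnonneg]
  calc _ ≤ ε / (V + 1) * V := hbound
    _ < ε / (V + 1) * (V + 1) := by nlinarith
    _ = ε := by field_simp
end

section
/- Let (Ω, P) be a probability space, D > 0, and let B : [0,1] → Ω → ℝ be a process such that B 0 = 0 almost surely, for any 0 ≤ t₀ ≤ t₁ ≤ ⋯ ≤ t_k ≤ 1 the increments B t₁ − B t₀, …, B t_k − B t_{k−1} are independent, for s ≤ t the increment B t − B s has law gaussianReal 0 (D·(t−s)), and for P-almost every ω the path t ↦ B t ω is continuous on [0,1]. Then for P-almost every ω, the path t ↦ B t ω does NOT have bounded variation on [0,1]. -/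
open MeasureTheory ProbabilityTheory Filter
open scoped NNReal ENNReal

section WienerAux

open Real Set

namespace WienerAux

variable {v : ℝ≥0}

lemma coe_pos (hv : v ≠ 0) : 0 < (v : ℝ) := by
  exact_mod_cast pos_iff_ne_zero.2 hv

lemma integral_gauss (hv : v ≠ 0) (g : ℝ → ℝ) :
    ∫ x, g x ∂(gaussianReal 0 v) = ∫ x, gaussianPDFReal 0 v x * g x := by
  rw [gaussianReal_of_var_ne_zero _ hv, gaussianPDF_def]
  have h1 : (fun x => ENNReal.ofReal (gaussianPDFReal 0 v x))
      = fun x => ((Real.toNNReal (gaussianPDFReal 0 v x) : ℝ≥0) : ℝ≥0∞) := rfl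
  rw [h1, integral_withDensity_eq_integral_smul
    (measurable_gaussianPDFReal 0 v).real_toNNReal g]
  congr 1
  funext x
  rw [NNReal.smul_def, Real.coe_toNNReal _ (gaussianPDFReal_nonneg 0 v x), smul_eq_mul]

lemma pdf_eq (v : ℝ≥0) (x : ℝ) :
    gaussianPDFReal 0 v x = (Real.sqrt (2 * π * v))⁻¹ *
      Real.exp (-((2 * (v : ℝ))⁻¹) * x ^ 2) := by
  rw [gaussianPDFReal, sub_zero]
  congr 1
  ring

lemma rpow_two_eq (x : ℝ) : x ^ (2 : ℝ) = x ^ 2 := by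
  rw [show (2 : ℝ) = ((2 : ℕ) : ℝ) by norm_num, Real.rpow_natCast]

lemma int_Ioi_one {b : ℝ} (hb : 0 < b) :
    ∫ x in Ioi (0 : ℝ), x * Real.exp (-b * x ^ 2) = (2 * b)⁻¹ := by
  have h := integral_rpow_mul_exp_neg_mul_rpow (p := 2) (q := 1) two_pos (by norm_num) hb
  rw [show ∫ x in Ioi (0:ℝ), x ^ (1:ℝ) * Real.exp (-b * x ^ (2:ℝ))
      = ∫ x in Ioi (0:ℝ), x * Real.exp (-b * x ^ 2) by
    refine setIntegral_congr_fun measurableSet_Ioi fun x _ => ?_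
    rw [Real.rpow_one, rpow_two_eq]] at h
  rw [h, show (-(1+1):ℝ)/2 = -1 by norm_num, Real.rpow_neg_one,
    show ((1:ℝ)+1)/2 = 1 by norm_num, Real.Gamma_one]
  rw [mul_inv]
  ring

lemma int_Ioi_sq {b : ℝ} (hb : 0 < b) :
    ∫ x in Ioi (0 : ℝ), x ^ 2 * Real.exp (-b * x ^ 2)
      = b ^ (-(3:ℝ)/2) * (Real.sqrt π / 4) := by
  have h := integral_rpow_mul_exp_neg_mul_rpow (p := 2) (q := 2) two_pos (by norm_num) hb
  rw [show ∫ x in Ioi (0:ℝ), x ^ (2:ℝ) * Real.exp (-b * x ^ (2:ℝ))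
      = ∫ x in Ioi (0:ℝ), x ^ 2 * Real.exp (-b * x ^ 2) by
    refine setIntegral_congr_fun measurableSet_Ioi fun x _ => ?_
    rw [rpow_two_eq]] at h
  have hg : Real.Gamma (((2:ℝ) + 1) / 2) = Real.sqrt π / 2 := by
    rw [show ((2:ℝ) + 1) / 2 = 1/2 + 1 by norm_num, Real.Gamma_add_one (by norm_num),
      Real.Gamma_one_half_eq]
    ring
  rw [h, hg, show (-((2:ℝ)+1))/2 = -(3:ℝ)/2 by norm_num]
  ring

lemma integral_gauss_abs (hv : v ≠ 0) :
    ∫ x, |x| ∂(gaussianReal 0 v) = Real.sqrt (2 * v) / Real.sqrt π := by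
  have hvpos := coe_pos hv
  have hb : (0:ℝ) < (2 * (v:ℝ))⁻¹ := by positivity
  rw [integral_gauss hv]
  have heq : (fun x : ℝ => gaussianPDFReal 0 v x * |x|)
      = fun x => (Real.sqrt (2 * π * v))⁻¹ * (|x| * Real.exp (-((2*(v:ℝ))⁻¹) * |x| ^ 2)) := by
    funext x
    rw [pdf_eq, sq_abs]
    ring
  rw [heq, integral_const_mul,
    integral_comp_abs (f := fun x => x * Real.exp (-((2*(v:ℝ))⁻¹) * x ^ 2)),
    int_Ioi_one hb]
  have h2v : (0:ℝ) < 2 * v := by positivity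
  have hs : Real.sqrt (2 * π * (v:ℝ)) = Real.sqrt π * Real.sqrt (2 * v) := by
    rw [← Real.sqrt_mul pi_pos.le]
    congr 1
    ring
  rw [hs]
  have h1 : Real.sqrt (2 * (v:ℝ)) * Real.sqrt (2 * (v:ℝ)) = 2 * (v:ℝ) :=
    Real.mul_self_sqrt h2v.le
  have hsp : (0:ℝ) < Real.sqrt π := Real.sqrt_pos.2 pi_pos
  have hs2 : (0:ℝ) < Real.sqrt (2 * v) := Real.sqrt_pos.2 h2v
  have hmm : Real.sqrt 2 * Real.sqrt (v:ℝ) = Real.sqrt (2*v) :=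
    (Real.sqrt_mul (by norm_num) _).symm
  have h2 : (Real.sqrt 2 * Real.sqrt (v:ℝ)) * (Real.sqrt 2 * Real.sqrt (v:ℝ)) = 2 * v := by
    rw [hmm]; exact h1
  field_simp
  nlinarith [h1, h2, hsp.le, hs2.le]

lemma integral_gauss_sq (hv : v ≠ 0) :
    ∫ x, x ^ 2 ∂(gaussianReal 0 v) = v := by
  have hvpos := coe_pos hv
  have h2v : (0:ℝ) < 2 * v := by positivity
  have hb : (0:ℝ) < (2 * (v:ℝ))⁻¹ := by positivity
  rw [integral_gauss hv]
  have heq : (fun x : ℝ => gaussianPDFReal 0 v x * x ^ 2)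
      = fun x => (Real.sqrt (2 * π * v))⁻¹ *
        (|x| ^ 2 * Real.exp (-((2*(v:ℝ))⁻¹) * |x| ^ 2)) := by
    funext x
    rw [pdf_eq, sq_abs]
    ring
  rw [heq, integral_const_mul,
    integral_comp_abs (f := fun x => x ^ 2 * Real.exp (-((2*(v:ℝ))⁻¹) * x ^ 2)),
    int_Ioi_sq hb]
  have hinv : ((2 * (v:ℝ))⁻¹) ^ (-(3:ℝ)/2) = (2 * (v:ℝ)) ^ ((3:ℝ)/2) := by
    rw [Real.inv_rpow h2v.le, show (-(3:ℝ)/2) = -((3:ℝ)/2) by ring, Real.rpow_neg h2v.le,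
      inv_inv]
  rw [hinv, show (3:ℝ)/2 = 1 + 1/2 by norm_num, Real.rpow_add h2v, Real.rpow_one,
    ← Real.sqrt_eq_rpow]
  have hs : Real.sqrt (2 * π * (v:ℝ)) = Real.sqrt π * Real.sqrt (2 * v) := by
    rw [← Real.sqrt_mul pi_pos.le]
    congr 1
    ring
  have h1 : Real.sqrt (2 * (v:ℝ)) * Real.sqrt (2 * (v:ℝ)) = 2 * (v:ℝ) :=
    Real.mul_self_sqrt h2v.le
  have hsp : (0:ℝ) < Real.sqrt π := Real.sqrt_pos.2 pi_pos
  have hs2 : (0:ℝ) < Real.sqrt (2 * v) := Real.sqrt_pos.2 h2v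
  rw [hs]
  have hmm : Real.sqrt 2 * Real.sqrt (v:ℝ) = Real.sqrt (2*v) :=
    (Real.sqrt_mul (by norm_num) _).symm
  have h2 : (Real.sqrt 2 * Real.sqrt (v:ℝ)) * (Real.sqrt 2 * Real.sqrt (v:ℝ)) = 2 * v := by
    rw [hmm]; exact h1
  field_simp
  nlinarith [h1, h2, hsp.le, hs2.le]

lemma integrable_gauss_sq (hv : v ≠ 0) :
    Integrable (fun x : ℝ => x ^ 2) (gaussianReal 0 v) := by
  have hvpos := coe_pos hv
  have hb : (0:ℝ) < (2 * (v:ℝ))⁻¹ := by positivity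
  rw [gaussianReal_of_var_ne_zero _ hv, gaussianPDF_def]
  have h1 : (fun x => ENNReal.ofReal (gaussianPDFReal 0 v x))
      = fun x => ((Real.toNNReal (gaussianPDFReal 0 v x) : ℝ≥0) : ℝ≥0∞) := rfl
  rw [h1, integrable_withDensity_iff_integrable_smul
    (measurable_gaussianPDFReal 0 v).real_toNNReal]
  have heq : (fun x : ℝ => (Real.toNNReal (gaussianPDFReal 0 v x)) • x ^ 2)
      = fun x => (Real.sqrt (2 * π * v))⁻¹ *
          (x ^ 2 * Real.exp (-((2*(v:ℝ))⁻¹) * x ^ 2)) := by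
    funext x
    rw [NNReal.smul_def, Real.coe_toNNReal _ (gaussianPDFReal_nonneg 0 v x), smul_eq_mul,
      pdf_eq]
    ring
  rw [heq]
  have hint : Integrable (fun x : ℝ => x ^ 2 * Real.exp (-((2*(v:ℝ))⁻¹) * x ^ 2)) := by
    have := integrable_rpow_mul_exp_neg_mul_sq hb (s := 2) (by norm_num)
    simpa [rpow_two_eq] using this
  exact hint.const_mul _

lemma memLp_gauss_id (hv : v ≠ 0) : MemLp (id : ℝ → ℝ) 2 (gaussianReal 0 v) := by
  rw [memLp_two_iff_integrable_sq aestronglyMeasurable_id]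
  simpa using integrable_gauss_sq hv

end WienerAux

end WienerAux

/-- Wiener's 1923 conclusion: a Brownian motion (a process on `[0,1]` with `B 0 = 0` a.s.,
independent increments, Gaussian increments `B t − B s ∼ N(0, D(t−s))`, and a.s. continuous
paths) has, almost surely, paths of unbounded variation on `[0,1]`. -/
theorem brownian_paths_not_boundedVariation
    {Ω : Type*} [MeasurableSpace Ω] (P : Measure Ω) [IsProbabilityMeasure P]
    (D : ℝ) (hD : 0 < D) (B : ℝ → Ω → ℝ)
    (h0 : ∀ᵐ ω ∂P, B 0 ω = 0)
    (hindep : ∀ (k : ℕ) (t : ℕ → ℝ), Monotone t → (∀ i, t i ∈ Set.Icc (0:ℝ) 1) →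
      iIndepFun
        (fun i : Fin k => fun ω => B (t (i + 1)) ω - B (t i) ω) P)
    (hlaw : ∀ s t : ℝ, 0 ≤ s → s ≤ t → t ≤ 1 →
      Measure.map (fun ω => B t ω - B s ω) P = gaussianReal 0 (Real.toNNReal (D * (t - s))))
    (hcont : ∀ᵐ ω ∂P, ContinuousOn (fun t => B t ω) (Set.Icc 0 1)) :
    ∀ᵐ ω ∂P, ¬ BoundedVariationOn (fun t => B t ω) (Set.Icc 0 1) := by
  classical
  have hπ := Real.pi_pos
  -- dyadic partition points, clipped at 1
  set u : ℕ → ℕ → ℝ := fun n j => min ((j : ℝ) / 2 ^ n) 1 with hu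
  set X : ℕ → ℕ → Ω → ℝ := fun n j ω => B (u n (j+1)) ω - B (u n j) ω with hX
  have h2npos : ∀ n : ℕ, (0:ℝ) < 2 ^ n := fun n => by positivity
  have hu_mono : ∀ n, Monotone (u n) := by
    intro n a b hab
    refine min_le_min ?_ le_rfl
    gcongr
  have hu_mem : ∀ n j, u n j ∈ Set.Icc (0:ℝ) 1 :=
    fun n j => ⟨le_min (by positivity) zero_le_one, min_le_right _ _⟩
  have hu_eq : ∀ n j, j ≤ 2^n → u n j = (j:ℝ)/2^n := by
    intro n j hj
    refine min_eq_left ?_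
    rw [div_le_one (h2npos n)]
    have := (Nat.cast_le (α := ℝ)).2 hj
    push_cast at this
    exact this
  set v : ℕ → ℝ≥0 := fun n => Real.toNNReal (D / 2 ^ n) with hv
  have hvpos : ∀ n, (0:ℝ) < D / 2^n := fun n => div_pos hD (h2npos n)
  have hvne : ∀ n, v n ≠ 0 := by
    intro n
    simp only [hv, ne_eq, Real.toNNReal_eq_zero, not_le]
    exact hvpos n
  have hvcoe : ∀ n, ((v n : ℝ)) = D / 2^n := fun n => Real.coe_toNNReal _ (hvpos n).le
  -- the law of the increments
  have hmap : ∀ n j, j < 2^n → Measure.map (X n j) P = gaussianReal 0 (v n) := by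
    intro n j hj
    have h1 : u n j = (j:ℝ)/2^n := hu_eq n j hj.le
    have h2 : u n (j+1) = ((j:ℝ)+1)/2^n := by
      rw [hu_eq n (j+1) hj]
      push_cast
      ring
    have hXeq : X n j = fun ω => B (((j:ℝ)+1)/2^n) ω - B ((j:ℝ)/2^n) ω := by
      funext ω
      show B (u n (j+1)) ω - B (u n j) ω = _
      rw [h1, h2]
    have h0' : (0:ℝ) ≤ (j:ℝ)/2^n := by positivity
    have hle : (j:ℝ)/2^n ≤ ((j:ℝ)+1)/2^n := by
      gcongr
      linarith
    have hle1 : ((j:ℝ)+1)/2^n ≤ 1 := by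
      rw [div_le_one (h2npos n)]
      have := (Nat.cast_le (α := ℝ)).2 (Nat.succ_le_of_lt hj)
      push_cast at this
      linarith
    rw [hXeq, hlaw _ _ h0' hle hle1]
    congr 1
    show (D * (((j:ℝ)+1)/2^n - (j:ℝ)/2^n)).toNNReal = Real.toNNReal (D / 2^n)
    refine congrArg Real.toNNReal ?_
    field_simp
    ring
  have hXae : ∀ n j, j < 2^n → AEMeasurable (X n j) P := by
    intro n j hj
    by_contra hc
    have hzero := Measure.map_of_not_aemeasurable hc
    have huniv : (gaussianReal 0 (v n)) Set.univ = 1 := measure_univ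
    rw [← hmap n j hj, hzero] at huniv
    simp at huniv
  have hXL2 : ∀ n j, j < 2^n → MemLp (X n j) 2 P := by
    intro n j hj
    have h1 : MemLp (id : ℝ → ℝ) 2 (Measure.map (X n j) P) := by
      rw [hmap n j hj]
      exact WienerAux.memLp_gauss_id (hvne n)
    exact (memLp_map_measure_iff aestronglyMeasurable_id (hXae n j hj)).1 h1
  have hEabs : ∀ n j, j < 2^n →
      ∫ ω, |X n j ω| ∂P = Real.sqrt (2 * (v n)) / Real.sqrt Real.pi := by
    intro n j hj
    have hmeq := integral_map (hXae n j hj)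
      (continuous_abs.aestronglyMeasurable (f := fun x : ℝ => |x|))
    rw [← hmeq, hmap n j hj, WienerAux.integral_gauss_abs (hvne n)]
  have hEsq : ∀ n j, j < 2^n → ∫ ω, (X n j ω) ^ 2 ∂P = (v n : ℝ) := by
    intro n j hj
    have hmeq := integral_map (hXae n j hj)
      ((continuous_pow 2).aestronglyMeasurable (f := fun x : ℝ => x ^ 2))
    rw [← hmeq, hmap n j hj, WienerAux.integral_gauss_sq (hvne n)]
  -- the dyadic total-variation sums
  set T : ℕ → Ω → ℝ := fun n => ∑ j ∈ Finset.range (2^n), fun ω => |X n j ω| with hT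
  have hTapp : ∀ n ω, T n ω = ∑ j ∈ Finset.range (2^n), |X n j ω| := by
    intro n ω
    rw [hT]
    simp [Finset.sum_apply]
  have hTL2 : ∀ n, MemLp (T n) 2 P := by
    intro n
    rw [hT]
    exact memLp_finset_sum' _ fun j hj => (hXL2 n j (Finset.mem_range.1 hj)).abs
  set m : ℕ → ℝ := fun n => 2^n * (Real.sqrt (2 * (v n)) / Real.sqrt Real.pi) with hm
  have hm_pos : ∀ n, 0 < m n := by
    intro n
    have h2vn : (0:ℝ) < 2 * (v n) := by
      have := hvpos n
      rw [← hvcoe n] at this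
      linarith
    exact mul_pos (h2npos n)
      (div_pos (Real.sqrt_pos.2 h2vn) (Real.sqrt_pos.2 hπ))
  have hTm : ∀ n, ∫ ω, T n ω ∂P = m n := by
    intro n
    simp only [hTapp]
    rw [integral_finset_sum (f := fun j ω => |X n j ω|) _ fun j hj =>
      ((hXL2 n j (Finset.mem_range.1 hj)).abs.integrable one_le_two)]
    rw [Finset.sum_congr rfl fun j hj => hEabs n j (Finset.mem_range.1 hj),
      Finset.sum_const, Finset.card_range, nsmul_eq_mul, hm]
    push_cast
    ring
  have hmsq : ∀ n, (m n)^2 = 2 * D * 2^n / Real.pi := by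
    intro n
    have h2vn : (0:ℝ) ≤ 2 * (v n) := by positivity
    have hsq := Real.sq_sqrt h2vn
    have hpq := Real.sq_sqrt hπ.le
    rw [hm]
    rw [mul_pow, div_pow, hsq, hpq, hvcoe n]
    field_simp
  -- independence and variance bound
  have hiInd : ∀ n, iIndepFun
      (fun j : Fin (2^n) => fun ω => |X n (j:ℕ) ω|) P := by
    intro n
    have h0' := hindep (2^n) (u n) (hu_mono n) (fun i => hu_mem n i)
    exact h0'.comp (fun _ => fun x : ℝ => |x|) (fun _ => measurable_abs)
  have hpair : ∀ n, Set.Pairwise ↑(Finset.range (2^n))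
      (fun i j => IndepFun (fun ω => |X n i ω|) (fun ω => |X n j ω|) P) := by
    intro n i hi j hj hij
    simp only [Finset.coe_range, Set.mem_Iio] at hi hj
    exact (hiInd n).indepFun (i := ⟨i, hi⟩) (j := ⟨j, hj⟩) (by simpa [Fin.ext_iff] using hij)
  have hvarT : ∀ n, variance (T n) P ≤ D := by
    intro n
    have hTn : T n = ∑ j ∈ Finset.range (2^n), fun ω => |X n j ω| := rfl
    have hvs := IndepFun.variance_sum (μ := P) (X := fun (j : ℕ) (ω : Ω) => |X n j ω|)
      (s := Finset.range (2^n))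
      (fun j hj => (hXL2 n j (Finset.mem_range.1 hj)).abs) (hpair n)
    rw [hTn, hvs]
    have hstep : ∀ j ∈ Finset.range (2^n),
        variance (fun ω => |X n j ω|) P ≤ (v n : ℝ) := by
      intro j hj
      refine le_trans (variance_le_expectation_sq
        ((hXL2 n j (Finset.mem_range.1 hj)).abs.aestronglyMeasurable)) (le_of_eq ?_)
      simp only [Pi.pow_apply]
      rw [show (∫ ω, |X n j ω| ^ 2 ∂P) = ∫ ω, (X n j ω) ^ 2 ∂P by
        congr 1
        funext ω
        rw [sq_abs]]
      exact hEsq n j (Finset.mem_range.1 hj)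
    refine le_trans (Finset.sum_le_sum hstep) (le_of_eq ?_)
    rw [Finset.sum_const, Finset.card_range, nsmul_eq_mul, hvcoe n]
    push_cast
    field_simp
  -- Chebyshev + Borel-Cantelli
  set A : ℕ → Set Ω := fun n => {ω | m n / 2 ≤ |T n ω - ∫ ω', T n ω' ∂P|} with hA
  have hAbound : ∀ n, P (A n) ≤ ENNReal.ofReal (2 * Real.pi * (1/2)^n) := by
    intro n
    have hcheb := meas_ge_le_variance_div_sq (hTL2 n) (c := m n / 2) (half_pos (hm_pos n))
    refine le_trans hcheb (ENNReal.ofReal_le_ofReal ?_)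
    have hpos : (0:ℝ) < (m n / 2)^2 := pow_pos (half_pos (hm_pos n)) 2
    have h1 : variance (T n) P / (m n / 2)^2 ≤ D / (m n / 2)^2 := by
      gcongr
      exact hvarT n
    refine le_trans h1 (le_of_eq ?_)
    rw [div_pow, hmsq n, one_div, inv_pow]
    have hpn := h2npos n
    field_simp
  have hsum : (∑' n, P (A n)) ≠ ⊤ := by
    have hb : ∀ n, P (A n) ≤ ENNReal.ofReal (2 * Real.pi) * (ENNReal.ofReal (1/2))^n := by
      intro n
      refine (hAbound n).trans (le_of_eq ?_)
      rw [← ENNReal.ofReal_pow (by norm_num), ← ENNReal.ofReal_mul (by positivity)]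
    refine ne_top_of_le_ne_top ?_ (ENNReal.tsum_le_tsum hb)
    rw [ENNReal.tsum_mul_left, ENNReal.tsum_geometric]
    refine ENNReal.mul_ne_top ENNReal.ofReal_ne_top ?_
    rw [ENNReal.inv_ne_top]
    rw [ne_eq, tsub_eq_zero_iff_le, not_le]
    exact ENNReal.ofReal_lt_one.2 (by norm_num)
  have hBC := MeasureTheory.ae_eventually_notMem hsum
  filter_upwards [hBC] with ω hω
  intro hBV
  have hVne : eVariationOn (fun t => B t ω) (Set.Icc 0 1) ≠ ⊤ := hBV
  set V : ℝ := (eVariationOn (fun t => B t ω) (Set.Icc 0 1)).toReal with hVdef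
  have hV0 : 0 ≤ V := ENNReal.toReal_nonneg
  have hTnonneg : ∀ n, 0 ≤ T n ω := by
    intro n
    rw [hTapp]
    exact Finset.sum_nonneg fun j hj => abs_nonneg _
  have hTle : ∀ n, T n ω ≤ V := by
    intro n
    have hsum_le := eVariationOn.sum_le (f := fun t => B t ω) (s := Set.Icc 0 1) (n := 2^n)
      (hu_mono n) (fun i => hu_mem n i)
    have hofReal : ENNReal.ofReal (T n ω) ≤ eVariationOn (fun t => B t ω) (Set.Icc 0 1) := by
      refine le_trans (le_of_eq ?_) hsum_le
      rw [hTapp n ω, ENNReal.ofReal_sum_of_nonneg (fun j hj => abs_nonneg _)]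
      refine Finset.sum_congr rfl fun j hj => ?_
      rw [edist_dist, Real.dist_eq]
    have := ENNReal.toReal_mono hVne hofReal
    rwa [ENNReal.toReal_ofReal (hTnonneg n)] at this
  obtain ⟨N, hN⟩ := eventually_atTop.1 hω
  obtain ⟨k, hk⟩ := pow_unbounded_of_one_lt (((2*V+1)^2) * Real.pi / (2*D))
    (one_lt_two (α := ℝ))
  set n := N + k with hn
  have h2k : ((2:ℝ))^k ≤ 2^n := by
    apply pow_le_pow_right₀ one_le_two
    omega
  have hgt : 2*V + 1 < m n := by
    have h1 : ((2*V+1)^2) * Real.pi / (2*D) < 2^n := lt_of_lt_of_le hk h2k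
    have h2 : (2*V+1)^2 < 2*D*2^n/Real.pi := by
      rw [div_lt_iff₀ (by positivity)] at h1
      rw [lt_div_iff₀ hπ]
      linarith
    have h2' : (2*V+1)^2 < (m n)^2 := by
      rw [hmsq n]
      exact h2
    nlinarith [hm_pos n, hV0]
  have hωn := hN n (Nat.le_add_right N k)
  simp only [hA, Set.mem_setOf_eq, not_le] at hωn
  have habs := (abs_lt.1 hωn).1
  rw [hTm n] at habs
  have hTgt : m n / 2 < T n ω := by linarith
  linarith [hTle n, hTgt, hgt]
end

section
/- Let (Ω, P) be a probability space and let χ : [0,1] → Ω → ℝ be a process such that χ 0 = 0 almost surely, for any 0 ≤ t₀ ≤ t₁ ≤ ⋯ ≤ t_k ≤ 1 the increments χ t₁ − χ t₀, …, χ t_k − χ t_{k−1} are independent, for s ≤ t the increment χ t − χ s has law gaussianReal 0 (t−s), and for P-almost every ω the path t ↦ χ t ω is continuous on [0,1]. Then for every λ > 1/2, the set of ω for which there exists t ∈ [0,1] with limsup_{ε → 0, t+ε ∈ [0,1]} |χ(t+ε)ω − χ(t)ω| / |ε|^λ < ∞ is contained in a P-null set. In particular, almost every Brownian path is nowhere differentiable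 on [0,1]. -/
open MeasureTheory ProbabilityTheory Filter Real
open scoped NNReal ENNReal Topology


lemma pwz_gauss_bound {Ω : Type*} [MeasurableSpace Ω] (P : Measure Ω) [IsProbabilityMeasure P]
    {g : Ω → ℝ} {v : ℝ≥0} (hv : v ≠ 0)
    (hg : Measure.map g P = gaussianReal 0 v) {c B : ℝ}
    (hB : (Real.sqrt (2 * π * v))⁻¹ ≤ B) :
    P {ω | |g ω| ≤ c} ≤ ENNReal.ofReal (2 * c * B) := by
  have hmg : AEMeasurable g P := aemeasurable_of_map_neZero (by rw [hg]; infer_instance)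
  have hset : {ω | |g ω| ≤ c} = g ⁻¹' (Set.Icc (-c) c) := by
    ext ω; simp [abs_le]
  rw [hset, ← Measure.map_apply_of_aemeasurable hmg measurableSet_Icc, hg,
    gaussianReal_apply _ hv]
  have hpdf : ∀ x : ℝ, gaussianPDF 0 v x ≤ ENNReal.ofReal B := by
    intro x
    refine ENNReal.ofReal_le_ofReal ?_
    unfold gaussianPDFReal
    calc (Real.sqrt (2 * π * v))⁻¹ * Real.exp (-(x - 0) ^ 2 / (2 * v))
        ≤ (Real.sqrt (2 * π * v))⁻¹ * 1 := by
          refine mul_le_mul_of_nonneg_left ?_ (by positivity)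
          refine Real.exp_le_one_iff.2 (div_nonpos_iff.2 (Or.inr ⟨neg_nonpos.2 (sq_nonneg _), by positivity⟩))
      _ ≤ B := by rwa [mul_one]
  calc ∫⁻ x in Set.Icc (-c) c, gaussianPDF 0 v x
      ≤ ∫⁻ _ in Set.Icc (-c) c, ENNReal.ofReal B := by
        exact lintegral_mono fun x => hpdf x
    _ = ENNReal.ofReal B * volume (Set.Icc (-c) c) := by
        rw [setLIntegral_const]
    _ = ENNReal.ofReal (2 * c * B) := by
        rw [Real.volume_Icc]
        have hB0 : 0 ≤ B := le_trans (by positivity) hB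
        rw [← ENNReal.ofReal_mul hB0]
        ring_nf

lemma pwz_key {Ω : Type*} [MeasurableSpace Ω] (P : Measure Ω) [IsProbabilityMeasure P]
    (χ : ℝ → Ω → ℝ)
    (hindep : ∀ (k : ℕ) (t : ℕ → ℝ), Monotone t → (∀ i, t i ∈ Set.Icc (0:ℝ) 1) →
      iIndepFun
        (fun i : Fin k => fun ω => χ (t (i + 1)) ω - χ (t i) ω) P)
    (hlaw : ∀ s t : ℝ, 0 ≤ s → s ≤ t → t ≤ 1 →
      Measure.map (fun ω => χ t ω - χ s ω) P = gaussianReal 0 (Real.toNNReal (t - s)))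
    (lam : ℝ) (hlam : 1 / 2 < lam) :
    ∃ N : Set Ω, MeasurableSet N ∧ P N = 0 ∧
      {ω | ∃ t ∈ Set.Icc (0:ℝ) 1,
        IsBoundedUnder (· ≤ ·) (nhdsWithin 0 {ε : ℝ | ε ≠ 0 ∧ t + ε ∈ Set.Icc (0:ℝ) 1})
          (fun ε => |χ (t + ε) ω - χ t ω| / |ε| ^ lam)} ⊆ N := by
  have hlam0 : (0:ℝ) < lam - 1/2 := by linarith
  have hlamnn : (0:ℝ) ≤ lam := by linarith
  set ℓ : ℕ := ⌈(lam - 1/2)⁻¹⌉₊ + 1 with hℓdef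
  have hℓ1 : 1 ≤ ℓ := Nat.le_add_left 1 _
  have hℓ0 : (0:ℝ) < ℓ := by exact_mod_cast hℓ1
  have hℓgt : (lam - 1/2)⁻¹ < (ℓ : ℝ) := by
    refine lt_of_le_of_lt (Nat.le_ceil _) ?_
    exact_mod_cast Nat.lt_succ_self _
  have hℓlam : 1 < (ℓ : ℝ) * (lam - 1/2) := by
    have h := mul_lt_mul_of_pos_right hℓgt hlam0
    rwa [inv_mul_cancel₀ (ne_of_gt hlam0)] at h
  clear_value ℓ
  set c : ℕ → ℕ → ℝ := fun n M => 2 * M * ((ℓ:ℝ)/n) ^ lam with hcdef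
  have hc0 : ∀ n M, 0 ≤ c n M := by intro n M; positivity
  set E : ℕ → ℕ → ℕ → ℕ → Set Ω := fun n M i j =>
    {ω | |χ (((i+j+1 : ℕ):ℝ)/(n:ℝ)) ω - χ (((i+j : ℕ):ℝ)/(n:ℝ)) ω| ≤ c n M} with hEdef
  set A : ℕ → ℕ → Set Ω := fun n M => ⋃ i ∈ Finset.range (n - ℓ + 1), ⋂ j : Fin ℓ, E n M i ↑j
    with hAdef
  -- measure bound for a single block
  have hblock : ∀ M n i, ℓ ≤ n → i ≤ n - ℓ →
      P (⋂ j : Fin ℓ, E n M i ↑j) ≤ ENNReal.ofReal ((2 * c n M * Real.sqrt n) ^ ℓ) := by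
    intro M n i hn hi
    have hn0 : 0 < n := lt_of_lt_of_le hℓ1 hn
    have hn0R : (0:ℝ) < n := by exact_mod_cast hn0
    have hiℓn : i + ℓ ≤ n := by omega
    set tg : ℕ → ℝ := fun m => ((i + min m ℓ : ℕ):ℝ)/(n:ℝ) with htgdef
    have htgmono : Monotone tg := by
      intro a b hab
      have h : (i + min a ℓ) ≤ (i + min b ℓ) := Nat.add_le_add_left (min_le_min hab le_rfl) i
      exact (div_le_div_iff_of_pos_right hn0R).2 (by exact_mod_cast h)
    have htgmem : ∀ m, tg m ∈ Set.Icc (0:ℝ) 1 := by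
      intro m
      constructor
      · positivity
      · rw [div_le_one hn0R]
        have : i + min m ℓ ≤ n := by omega
        exact_mod_cast this
    have hiid := hindep ℓ tg htgmono htgmem
    have hfun : (fun (j : Fin ℓ) (ω : Ω) => χ (tg (↑j + 1)) ω - χ (tg ↑j) ω)
        = fun (j : Fin ℓ) ω => χ (((i + ↑j + 1 : ℕ):ℝ)/(n:ℝ)) ω - χ (((i + ↑j : ℕ):ℝ)/(n:ℝ)) ω := by
      funext j ω
      have hj : (j : ℕ) < ℓ := j.isLt
      have h1 : i + min ((j:ℕ) + 1) ℓ = i + (j:ℕ) + 1 := by omega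
      have h2 : i + min (j:ℕ) ℓ = i + (j:ℕ) := by omega
      simp only [htgdef, h1, h2]
    rw [hfun] at hiid
    have hprod := hiid.meas_iInter (s := fun j : Fin ℓ => E n M i ↑j) ?_
    swap
    · intro j
      exact ⟨Set.Icc (-(c n M)) (c n M), measurableSet_Icc, by ext ω; simp [hEdef, abs_le]⟩
    rw [hprod]
    have hfac : ∀ j : Fin ℓ, P (E n M i ↑j) ≤ ENNReal.ofReal (2 * c n M * Real.sqrt n) := by
      intro j
      have hj := j.isLt
      have hle1 : ((i + ↑j + 1 : ℕ):ℝ)/(n:ℝ) ≤ 1 := by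
        rw [div_le_one hn0R]
        have : i + ↑j + 1 ≤ n := by omega
        exact_mod_cast this
      have hss : ((i + ↑j : ℕ):ℝ)/(n:ℝ) ≤ ((i + ↑j + 1 : ℕ):ℝ)/(n:ℝ) := by
        exact (div_le_div_iff_of_pos_right hn0R).2 (by exact_mod_cast Nat.le_succ (i + ↑j))
      have hlw := hlaw (((i + ↑j : ℕ):ℝ)/(n:ℝ)) (((i + ↑j + 1 : ℕ):ℝ)/(n:ℝ))
        (by positivity) hss hle1
      have hdiff : ((i + ↑j + 1 : ℕ):ℝ)/(n:ℝ) - ((i + ↑j : ℕ):ℝ)/(n:ℝ) = 1/(n:ℝ) := by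
        push_cast
        field_simp
        ring
      rw [hdiff] at hlw
      have hv : Real.toNNReal (1/(n:ℝ)) ≠ 0 := by
        simp only [ne_eq, Real.toNNReal_eq_zero, not_le]
        positivity
      refine pwz_gauss_bound P hv hlw ?_
      have hvco : ((Real.toNNReal (1/(n:ℝ))) : ℝ) = 1/(n:ℝ) := by
        rw [Real.coe_toNNReal]
        positivity
      rw [hvco]
      have h1 : (1:ℝ)/(n:ℝ) ≤ 2 * π * (1/(n:ℝ)) := by
        have hπ : (1:ℝ) ≤ 2 * π := by nlinarith [Real.pi_gt_three]
        nlinarith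
      calc (Real.sqrt (2 * π * (1/(n:ℝ))))⁻¹ ≤ (Real.sqrt (1/(n:ℝ)))⁻¹ := by
            apply inv_anti₀ ?_ (Real.sqrt_le_sqrt h1)
            positivity
        _ = Real.sqrt n := by
            rw [one_div, Real.sqrt_inv, inv_inv]
    calc ∏ j : Fin ℓ, P (E n M i ↑j)
        ≤ ∏ _j : Fin ℓ, ENNReal.ofReal (2 * c n M * Real.sqrt n) :=
          Finset.prod_le_prod' fun j _ => hfac j
      _ = (ENNReal.ofReal (2 * c n M * Real.sqrt n)) ^ ℓ := by
          simp [Finset.prod_const]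
      _ = ENNReal.ofReal ((2 * c n M * Real.sqrt n) ^ ℓ) := by
          rw [← ENNReal.ofReal_pow (by positivity)]
  have hAle : ∀ M n, ℓ ≤ n →
      P (A n M) ≤ ENNReal.ofReal ((n:ℝ) * (2 * c n M * Real.sqrt n) ^ ℓ) := by
    intro M n hn
    calc P (A n M) ≤ ∑ i ∈ Finset.range (n - ℓ + 1), P (⋂ j : Fin ℓ, E n M i ↑j) :=
          measure_biUnion_finset_le _ _
      _ ≤ ∑ _i ∈ Finset.range (n - ℓ + 1), ENNReal.ofReal ((2 * c n M * Real.sqrt n) ^ ℓ) := by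
          refine Finset.sum_le_sum fun i hi => hblock M n i hn ?_
          simp only [Finset.mem_range] at hi; omega
      _ = (n - ℓ + 1 : ℕ) * ENNReal.ofReal ((2 * c n M * Real.sqrt n) ^ ℓ) := by
          simp [Finset.sum_const, nsmul_eq_mul]
      _ ≤ ENNReal.ofReal ((n:ℝ) * (2 * c n M * Real.sqrt n) ^ ℓ) := by
          rw [ENNReal.ofReal_mul (by positivity)]
          apply mul_le_mul_left 
          rw [← ENNReal.ofReal_natCast (n - ℓ + 1)]
          apply ENNReal.ofReal_le_ofReal
          have : n - ℓ + 1 ≤ n := by omega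
          exact_mod_cast this
  -- asymptotics
  set β : ℝ := 1 + (1/2 - lam) * ℓ with hβdef
  have hβneg : β < 0 := by
    have : (1/2 - lam) * ℓ = -((ℓ:ℝ) * (lam - 1/2)) := by ring
    rw [hβdef, this]
    linarith
  have htendR : ∀ M : ℕ, Tendsto (fun n : ℕ => (n:ℝ) * (2 * c n M * Real.sqrt n) ^ ℓ)
      atTop (𝓝 0) := by
    intro M
    have h2 : Tendsto (fun x : ℝ => (4*(M:ℝ)*(ℓ:ℝ)^lam)^ℓ * x ^ (-(-β))) atTop
        (𝓝 ((4*(M:ℝ)*(ℓ:ℝ)^lam)^ℓ * 0)) :=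
      (tendsto_rpow_neg_atTop (by linarith)).const_mul _
    rw [mul_zero] at h2
    have h3 := h2.comp tendsto_natCast_atTop_atTop (α := ℕ)
    refine h3.congr' ?_
    filter_upwards [eventually_ge_atTop 1] with n hn
    have hn0R : (0:ℝ) < n := by exact_mod_cast hn
    have e1 : 2 * c n M * Real.sqrt n = (4*(M:ℝ)*(ℓ:ℝ)^lam) * (n:ℝ) ^ ((1:ℝ)/2 - lam) := by
      have e0 : ((ℓ:ℝ)/n) ^ lam = (ℓ:ℝ)^lam * ((n:ℝ) ^ lam)⁻¹ := by
        rw [Real.div_rpow hℓ0.le hn0R.le, div_eq_mul_inv]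
      simp only [hcdef]
      rw [e0, Real.sqrt_eq_rpow, Real.rpow_sub hn0R, div_eq_mul_inv]
      ring
    have e2 : ((n:ℝ) ^ ((1:ℝ)/2 - lam)) ^ ℓ = (n:ℝ) ^ (((1:ℝ)/2 - lam) * ℓ) := by
      rw [← Real.rpow_natCast ((n:ℝ) ^ ((1:ℝ)/2 - lam)) ℓ, ← Real.rpow_mul hn0R.le]
    show (4*(M:ℝ)*(ℓ:ℝ)^lam)^ℓ * ((n:ℝ)) ^ (-(-β)) = (n:ℝ) * (2 * c n M * Real.sqrt n) ^ ℓ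
    rw [e1]
    simp only [mul_pow]
    rw [e2, neg_neg, hβdef, Real.rpow_add hn0R, Real.rpow_one]
    ring
  -- the tail intersections are null
  have hT : ∀ M n₀ : ℕ, P (⋂ k : ℕ, A (k + (ℓ + n₀)) M) = 0 := by
    intro M n₀
    have hub : ∀ k : ℕ, P (⋂ k' : ℕ, A (k' + (ℓ + n₀)) M) ≤
        ENNReal.ofReal (((k + (ℓ + n₀) : ℕ):ℝ)
          * (2 * c (k + (ℓ + n₀)) M * Real.sqrt ((k + (ℓ + n₀) : ℕ))) ^ ℓ) := fun k =>
      le_trans (measure_mono (Set.iInter_subset _ k)) (hAle M _ (by omega))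
    have h0' : Tendsto (fun k : ℕ => ENNReal.ofReal (((k + (ℓ + n₀) : ℕ):ℝ)
        * (2 * c (k + (ℓ + n₀)) M * Real.sqrt ((k + (ℓ + n₀) : ℕ))) ^ ℓ)) atTop (𝓝 0) := by
      rw [← ENNReal.ofReal_zero]
      exact (ENNReal.continuous_ofReal.tendsto 0).comp
        ((htendR M).comp (tendsto_add_atTop_nat (ℓ + n₀)))
    exact le_antisymm (ge_of_tendsto h0' (Eventually.of_forall hub)) zero_le
  set S : Set Ω := ⋃ M : ℕ, ⋃ n₀ : ℕ, ⋂ k : ℕ, A (k + (ℓ + n₀)) M with hSdef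
  have hS0 : P S = 0 :=
    measure_iUnion_null fun M => measure_iUnion_null fun n₀ => hT M n₀
  refine ⟨toMeasurable P S, measurableSet_toMeasurable P S,
    by rw [measure_toMeasurable]; exact hS0, ?_⟩
  intro ω hω
  apply subset_toMeasurable P S
  obtain ⟨t, ht, hbdd⟩ := hω
  obtain ⟨b, hb⟩ := hbdd
  rw [eventually_map] at hb
  rw [eventually_nhdsWithin_iff] at hb
  obtain ⟨δ, hδ, hball⟩ := Metric.eventually_nhds_iff.mp hb
  set M : ℕ := ⌈max b 1⌉₊ with hMdef
  have hMb : b ≤ (M:ℝ) := le_trans (le_max_left _ _) (Nat.le_ceil _)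
  have hM0 : (0:ℝ) ≤ M := by positivity
  clear_value M
  obtain ⟨n₀, hn₀⟩ := exists_nat_gt ((ℓ:ℝ)/δ)
  refine Set.mem_iUnion.2 ⟨M, Set.mem_iUnion.2 ⟨n₀, Set.mem_iInter.2 fun k => ?_⟩⟩
  set n : ℕ := k + (ℓ + n₀) with hndef
  have hℓn : ℓ ≤ n := by omega
  have hn0 : 0 < n := by omega
  have hn0R : (0:ℝ) < n := by exact_mod_cast hn0
  have hnδ : (ℓ:ℝ)/n < δ := by
    rw [div_lt_iff₀ hn0R]
    have h1 : ((ℓ:ℝ)/δ) < (n:ℝ) := lt_of_lt_of_le hn₀ (by exact_mod_cast (by omega : n₀ ≤ n))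
    rw [div_lt_iff₀ hδ] at h1
    linarith [mul_comm δ (n:ℝ)]
  clear_value n
  set i : ℕ := min (Nat.floor (t * n)) (n - ℓ) with hidef
  have hiub : i ≤ n - ℓ := min_le_right _ _
  have htn0 : (0:ℝ) ≤ t * n := mul_nonneg ht.1 hn0R.le
  have hit : (i:ℝ) ≤ t * n := by
    refine le_trans ?_ (Nat.floor_le htn0)
    exact_mod_cast min_le_left _ _
  have hti : t * n ≤ (i:ℝ) + ℓ := by
    rcases le_or_gt (Nat.floor (t * n)) (n - ℓ) with h|h
    · have hieq : i = Nat.floor (t * n) := min_eq_left h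
      have h1 : t * n < Nat.floor (t * n) + 1 := Nat.lt_floor_add_one _
      have h2 : (1:ℝ) ≤ ℓ := by exact_mod_cast hℓ1
      rw [hieq]
      linarith
    · have hieq : i = n - ℓ := min_eq_right h.le
      have h1 : t * n ≤ n := by
        calc t * n ≤ 1 * n := mul_le_mul_of_nonneg_right ht.2 hn0R.le
          _ = n := one_mul _
      have h2 : ((n - ℓ : ℕ):ℝ) = (n:ℝ) - ℓ := by
        push_cast [Nat.cast_sub hℓn]
        ring
      rw [hieq, h2]
      linarith
  clear_value i
  have hgrid : ∀ j : ℕ, j ≤ ℓ → |((i+j : ℕ):ℝ)/(n:ℝ) - t| ≤ (ℓ:ℝ)/n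
      ∧ ((i+j : ℕ):ℝ)/(n:ℝ) ∈ Set.Icc (0:ℝ) 1 := by
    intro j hj
    have hjR : (j:ℝ) ≤ ℓ := by exact_mod_cast hj
    constructor
    · have e : ((i+j : ℕ):ℝ)/(n:ℝ) - t = (((i+j : ℕ):ℝ) - t * n)/n := by
        field_simp
      rw [e, abs_div, abs_of_pos hn0R]
      refine (div_le_div_iff_of_pos_right hn0R).2 ?_
      rw [abs_le]
      have hj0 : (0:ℝ) ≤ (j:ℝ) := Nat.cast_nonneg j
      constructor
      · push_cast
        linarith
      · push_cast
        linarith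
    · constructor
      · positivity
      · rw [div_le_one hn0R]
        have : i + j ≤ n := by omega
        exact_mod_cast this
  have hchi : ∀ j : ℕ, j ≤ ℓ →
      |χ (((i+j : ℕ):ℝ)/(n:ℝ)) ω - χ t ω| ≤ (M:ℝ) * ((ℓ:ℝ)/n) ^ lam := by
    intro j hj
    obtain ⟨habs, hmem⟩ := hgrid j hj
    set ε : ℝ := ((i+j : ℕ):ℝ)/(n:ℝ) - t with hεdef
    have hte : t + ε = ((i+j : ℕ):ℝ)/(n:ℝ) := by rw [hεdef]; ring
    by_cases hε : ε = 0
    · have he : ((i+j : ℕ):ℝ)/(n:ℝ) = t := by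
        have := sub_eq_zero.mp hε
        linarith [this]
      rw [he, sub_self, abs_zero]
      exact mul_nonneg hM0 (Real.rpow_nonneg (div_nonneg (Nat.cast_nonneg ℓ) (Nat.cast_nonneg n)) _)
    · have hd : dist ε 0 < δ := by
        rw [Real.dist_eq, sub_zero]
        exact lt_of_le_of_lt habs hnδ
      have hmem' : ε ∈ {ε : ℝ | ε ≠ 0 ∧ t + ε ∈ Set.Icc (0:ℝ) 1} := by
        refine ⟨hε, ?_⟩
        rw [hte]
        exact hmem
      have hb' : |χ (t + ε) ω - χ t ω| / |ε| ^ lam ≤ b := hball hd hmem'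
      have hεpos : 0 < |ε| := abs_pos.2 hε
      have hrp : (0:ℝ) < |ε| ^ lam := Real.rpow_pos_of_pos hεpos _
      rw [div_le_iff₀ hrp] at hb'
      rw [hte] at hb'
      calc |χ (((i+j : ℕ):ℝ)/(n:ℝ)) ω - χ t ω| ≤ b * |ε| ^ lam := hb'
        _ ≤ (M:ℝ) * ((ℓ:ℝ)/n) ^ lam := by
            refine mul_le_mul hMb ?_ hrp.le hM0
            exact Real.rpow_le_rpow (abs_nonneg _) habs hlamnn
  show ω ∈ A n M
  refine Set.mem_iUnion.2 ⟨i, Set.mem_iUnion.2 ⟨Finset.mem_range.2 (by omega), ?_⟩⟩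
  refine Set.mem_iInter.2 fun j => ?_
  have hj : (j:ℕ) < ℓ := j.isLt
  show |χ (((i + (j:ℕ) + 1 : ℕ):ℝ)/(n:ℝ)) ω - χ (((i + (j:ℕ) : ℕ):ℝ)/(n:ℝ)) ω| ≤ c n M
  have h1 := hchi ((j:ℕ) + 1) (by omega)
  have h2 := hchi (j:ℕ) (by omega)
  have he : i + ((j:ℕ) + 1) = i + (j:ℕ) + 1 := rfl
  rw [he] at h1
  have : c n M = 2 * (M:ℝ) * ((ℓ:ℝ)/n) ^ lam := rfl
  rw [this]
  calc |χ (((i + (j:ℕ) + 1 : ℕ):ℝ)/(n:ℝ)) ω - χ (((i + (j:ℕ) : ℕ):ℝ)/(n:ℝ)) ω|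
      ≤ |χ (((i + (j:ℕ) + 1 : ℕ):ℝ)/(n:ℝ)) ω - χ t ω|
        + |χ (((i + (j:ℕ) : ℕ):ℝ)/(n:ℝ)) ω - χ t ω| := by
        refine le_trans (abs_sub_le _ (χ t ω) _) ?_
        rw [abs_sub_comm (χ t ω)]
    _ ≤ (M:ℝ) * ((ℓ:ℝ)/n) ^ lam + (M:ℝ) * ((ℓ:ℝ)/n) ^ lam := add_le_add h1 h2
    _ = 2 * (M:ℝ) * ((ℓ:ℝ)/n) ^ lam := by ring


/-- Theorem VII of Paley–Wiener–Zygmund (1933): for a Brownian motion `χ` on `[0,1]`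
(with `χ 0 = 0` a.s., independent increments, Gaussian increments
`χ t − χ s ∼ N(0, t−s)`, and a.s. continuous paths) and every `λ > 1/2`, the set of `ω`
for which there exists `t ∈ [0,1]` with
`limsup_{ε → 0, t+ε ∈ [0,1]} |χ(t+ε)ω − χ(t)ω| / |ε|^λ < ∞`
is contained in a `P`-null set. In particular, almost every Brownian path is nowhere
differentiable on `[0,1]`. -/
theorem paley_wiener_zygmund_nowhere_holder
    {Ω : Type*} [MeasurableSpace Ω] (P : Measure Ω) [IsProbabilityMeasure P]
    (χ : ℝ → Ω → ℝ)
    (h0 : ∀ᵐ ω ∂P, χ 0 ω = 0)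
    (hindep : ∀ (k : ℕ) (t : ℕ → ℝ), Monotone t → (∀ i, t i ∈ Set.Icc (0:ℝ) 1) →
      iIndepFun
        (fun i : Fin k => fun ω => χ (t (i + 1)) ω - χ (t i) ω) P)
    (hlaw : ∀ s t : ℝ, 0 ≤ s → s ≤ t → t ≤ 1 →
      Measure.map (fun ω => χ t ω - χ s ω) P = gaussianReal 0 (Real.toNNReal (t - s)))
    (hcont : ∀ᵐ ω ∂P, ContinuousOn (fun t => χ t ω) (Set.Icc 0 1))
    (lam : ℝ) (hlam : 1 / 2 < lam) :
    (∃ N : Set Ω, MeasurableSet N ∧ P N = 0 ∧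
      {ω | ∃ t ∈ Set.Icc (0:ℝ) 1,
        IsBoundedUnder (· ≤ ·) (nhdsWithin 0 {ε : ℝ | ε ≠ 0 ∧ t + ε ∈ Set.Icc (0:ℝ) 1})
          (fun ε => |χ (t + ε) ω - χ t ω| / |ε| ^ lam)} ⊆ N)
    ∧ ∃ N' : Set Ω, MeasurableSet N' ∧ P N' = 0 ∧
        {ω | ∃ t ∈ Set.Icc (0:ℝ) 1,
          DifferentiableWithinAt ℝ (fun s => χ s ω) (Set.Icc 0 1) t} ⊆ N' := by
  refine ⟨pwz_key P χ hindep hlaw lam hlam, ?_⟩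
  obtain ⟨N', hm, h0', hsub⟩ := pwz_key P χ hindep hlaw (3/4) (by norm_num)
  refine ⟨N', hm, h0', fun ω hω => hsub ?_⟩
  obtain ⟨t, ht, hdiff⟩ := hω
  refine ⟨t, ht, ?_⟩
  obtain ⟨C, hC⟩ := hdiff.isBigO_sub.bound
  set C' : ℝ := max C 0 with hC'def
  have hC'0 : 0 ≤ C' := le_max_right _ _
  have hmap : Tendsto (fun ε : ℝ => t + ε)
      (nhdsWithin 0 {ε : ℝ | ε ≠ 0 ∧ t + ε ∈ Set.Icc (0:ℝ) 1})
      (nhdsWithin t (Set.Icc 0 1)) := by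
    rw [tendsto_nhdsWithin_iff]
    constructor
    · have h1 : Tendsto (fun ε : ℝ => t + ε) (𝓝 0) (𝓝 (t + 0)) :=
        (continuous_const.add continuous_id).tendsto 0
      rw [add_zero] at h1
      exact h1.mono_left nhdsWithin_le_nhds
    · filter_upwards [self_mem_nhdsWithin] with ε hε
      exact hε.2
  have hC2 := hmap.eventually hC
  have hsmall : ∀ᶠ ε : ℝ in nhdsWithin 0 {ε : ℝ | ε ≠ 0 ∧ t + ε ∈ Set.Icc (0:ℝ) 1},
      |ε| ≤ 1 := by
    have h1 : ∀ᶠ ε : ℝ in 𝓝 (0:ℝ), |ε| ≤ 1 := by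
      filter_upwards [Metric.ball_mem_nhds (0:ℝ) one_pos] with ε hε
      rw [Metric.mem_ball, Real.dist_eq, sub_zero] at hε
      exact hε.le
    exact h1.filter_mono nhdsWithin_le_nhds
  refine ⟨C', ?_⟩
  rw [eventually_map]
  filter_upwards [hC2, hsmall, self_mem_nhdsWithin] with ε h1 h2 h3
  have hε0 : ε ≠ 0 := h3.1
  have hεpos : 0 < |ε| := abs_pos.2 hε0
  have hrp : (0:ℝ) < |ε| ^ (3/4 : ℝ) := Real.rpow_pos_of_pos hεpos _
  rw [div_le_iff₀ hrp]
  have h1' : |χ (t + ε) ω - χ t ω| ≤ C * |ε| := by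
    have := h1
    rw [Real.norm_eq_abs, Real.norm_eq_abs, add_sub_cancel_left] at this
    exact this
  calc |χ (t + ε) ω - χ t ω| ≤ C * |ε| := h1'
    _ ≤ C' * |ε| := mul_le_mul_of_nonneg_right (le_max_left _ _) (abs_nonneg _)
    _ ≤ C' * |ε| ^ (3/4 : ℝ) := by
        refine mul_le_mul_of_nonneg_left ?_ hC'0
        calc |ε| = |ε| ^ (1:ℝ) := (Real.rpow_one _).symm
          _ ≤ |ε| ^ (3/4 : ℝ) := Real.rpow_le_rpow_of_exponent_ge hεpos h2 (by norm_num)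
end

section
/- Let m > 0, k_B T > 0, β > 0, v₀ ∈ ℝ, and set γ = 2βk_BT/m. Define, for t > 0 and v ∈ ℝ, f(v,t) = √( m / (2π k_B T (1 − e^{−2βt})) ) · exp( −(m/(2k_BT)) · (v − v₀e^{−βt})² / (1 − e^{−2βt}) ). Then f satisfies Ornstein's Fokker–Planck equation for the velocity: for all v ∈ ℝ and t > 0, ∂f/∂t = β · ∂(v·f)/∂v + (γ/2) · ∂²f/∂v². -/
open Real

set_option maxHeartbeats 1600000 in
/-- Ornstein's velocity Fokker–Planck equation: with `γ = 2βk_BT/m`, the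
Ornstein–Uhlenbeck transition density
`f(v,t) = √(m/(2πk_BT(1−e^{−2βt}))) · exp(−(m/(2k_BT))(v − v₀e^{−βt})²/(1−e^{−2βt}))`
satisfies `∂f/∂t = β·∂(v·f)/∂v + (γ/2)·∂²f/∂v²` for all `v ∈ ℝ` and `t > 0`. -/
theorem ornstein_velocity_fokker_planck (m kT β v₀ γ : ℝ)
    (hm : 0 < m) (hkT : 0 < kT) (hβ : 0 < β) (hγ : γ = 2 * β * kT / m)
    (f : ℝ → ℝ → ℝ)
    (hf : ∀ v t : ℝ, 0 < t →
      f v t = Real.sqrt (m / (2 * π * kT * (1 - Real.exp (-2 * β * t)))) *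
        Real.exp (-(m / (2 * kT)) * (v - v₀ * Real.exp (-β * t)) ^ 2
          / (1 - Real.exp (-2 * β * t)))) :
    ∀ v t : ℝ, 0 < t →
      deriv (fun s => f v s) t
        = β * deriv (fun w => w * f w t) v + γ / 2 * iteratedDeriv 2 (fun w => f w t) v := by
  intro v t ht
  have hπ : (0:ℝ) < π := Real.pi_pos
  have hSpos : ∀ s : ℝ, 0 < s → (0:ℝ) < 1 - Real.exp (-2 * β * s) := by
    intro s hs
    have : Real.exp (-2 * β * s) < 1 := by
      rw [Real.exp_lt_one_iff]; nlinarith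
    linarith
  have hS : (0:ℝ) < 1 - Real.exp (-2 * β * t) := hSpos t ht
  have harg : 0 < m / (2 * π * kT * (1 - Real.exp (-2 * β * t))) := by positivity
  have hA0 : 0 < Real.sqrt (m / (2 * π * kT * (1 - Real.exp (-2 * β * t)))) :=
    Real.sqrt_pos.mpr harg
  have hA2 : (Real.sqrt (m / (2 * π * kT * (1 - Real.exp (-2 * β * t))))) ^ 2
      = m / (2 * π * kT * (1 - Real.exp (-2 * β * t))) := Real.sq_sqrt harg.le
  -- abbreviations (purely notational)
  set q : ℝ := Real.exp (-2 * β * t) with hq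
  set E : ℝ := Real.exp (-β * t) with hE
  set A : ℝ := Real.sqrt (m / (2 * π * kT * (1 - q))) with hA
  -- time derivative
  have hev : (fun s => f v s) =ᶠ[nhds t]
      (fun s => Real.sqrt (m / (2 * π * kT * (1 - Real.exp (-2 * β * s)))) *
        Real.exp (-(m / (2 * kT)) * (v - v₀ * Real.exp (-β * s)) ^ 2
          / (1 - Real.exp (-2 * β * s)))) := by
    filter_upwards [Ioi_mem_nhds ht] with s hs
    exact hf v s hs
  rw [hev.deriv_eq]
  -- derivative of S s = 1 - exp (-2βs)
  have hlin : HasDerivAt (fun s : ℝ => -2 * β * s) (-2 * β) t := by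
    simpa using (hasDerivAt_id t).const_mul (-2 * β)
  have hq' : HasDerivAt (fun s : ℝ => Real.exp (-2 * β * s)) (q * (-2 * β)) t := hlin.exp
  have hS' : HasDerivAt (fun s : ℝ => 1 - Real.exp (-2 * β * s)) (2 * β * q) t := by
    have := (hasDerivAt_const t (1:ℝ)).sub hq'
    refine this.congr_deriv ?_; ring
  -- derivative of the sqrt factor
  have hden : HasDerivAt (fun s : ℝ => 2 * π * kT * (1 - Real.exp (-2 * β * s)))
      (2 * π * kT * (2 * β * q)) t := hS'.const_mul (2 * π * kT)
  have hdne : 2 * π * kT * (1 - q) ≠ 0 := by positivity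
  have hfrac : HasDerivAt (fun s : ℝ => m / (2 * π * kT * (1 - Real.exp (-2 * β * s))))
      ((0 * (2 * π * kT * (1 - q)) - m * (2 * π * kT * (2 * β * q)))
        / (2 * π * kT * (1 - q)) ^ 2) t :=
    (hasDerivAt_const t m).div hden hdne
  have hsqrt : HasDerivAt
      (fun s : ℝ => Real.sqrt (m / (2 * π * kT * (1 - Real.exp (-2 * β * s)))))
      (-(β * q / (1 - q)) * A) t := by
    have h := hfrac.sqrt harg.ne'
    refine h.congr_deriv ?_
    have hA2' : A ^ 2 * (2 * π * kT * (1 - q)) = m := by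
      rw [hA2]; field_simp
    rw [← hq, ← hA, ← hA2']
    have hAne := hA0.ne'
    have hSne := hS.ne'
    field_simp
    ring
  -- derivative of the exponential factor in time
  have hu : HasDerivAt (fun s : ℝ => v - v₀ * Real.exp (-β * s)) (v₀ * β * E) t := by
    have h1 : HasDerivAt (fun s : ℝ => -β * s) (-β) t := by
      simpa using (hasDerivAt_id t).const_mul (-β)
    have h2 := ((h1.exp).const_mul v₀)
    have := (hasDerivAt_const t v).sub h2
    refine this.congr_deriv ?_
    rw [hE]; ring
  have hu2 : HasDerivAt (fun s : ℝ => (v - v₀ * Real.exp (-β * s)) ^ 2)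
      (2 * (v - v₀ * E) * (v₀ * β * E)) t := by
    have := hu.pow 2
    refine this.congr_deriv ?_
    rw [← hE]
    norm_num
  have hnum : HasDerivAt (fun s : ℝ => -(m / (2 * kT)) * (v - v₀ * Real.exp (-β * s)) ^ 2)
      (-(m / (2 * kT)) * (2 * (v - v₀ * E) * (v₀ * β * E))) t := hu2.const_mul _
  have hin : HasDerivAt (fun s : ℝ => -(m / (2 * kT)) * (v - v₀ * Real.exp (-β * s)) ^ 2
        / (1 - Real.exp (-2 * β * s)))
      ((-(m / (2 * kT)) * (2 * (v - v₀ * E) * (v₀ * β * E)) * (1 - q)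
        - (-(m / (2 * kT)) * (v - v₀ * E) ^ 2) * (2 * β * q)) / (1 - q) ^ 2) t :=
    hnum.div hS' hS.ne'
  have hX := hin.exp
  have hFt := hsqrt.mul hX
  rw [HasDerivAt.deriv (f := fun s => Real.sqrt (m / (2 * π * kT * (1 - Real.exp (-2 * β * s)))) *
          Real.exp (-(m / (2 * kT)) * (v - v₀ * Real.exp (-β * s)) ^ 2
            / (1 - Real.exp (-2 * β * s)))) hFt]
  -- space derivatives
  have h1 : (fun w => w * f w t) = (fun w => w *
      (A * Real.exp (-(m / (2 * kT)) * (w - v₀ * E) ^ 2 / (1 - q)))) := by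
    funext w; rw [hf w t ht]
  have h2 : (fun w => f w t) = (fun w =>
      A * Real.exp (-(m / (2 * kT)) * (w - v₀ * E) ^ 2 / (1 - q))) := by
    funext w; rw [hf w t ht]
  rw [h1, h2]
  have hgv : ∀ w : ℝ, HasDerivAt
      (fun w => A * Real.exp (-(m / (2 * kT)) * (w - v₀ * E) ^ 2 / (1 - q)))
      (A * Real.exp (-(m / (2 * kT)) * (w - v₀ * E) ^ 2 / (1 - q))
        * (-(m / (2 * kT)) * (2 * (w - v₀ * E)) / (1 - q))) w := by
    intro w
    have h0 : HasDerivAt (fun w : ℝ => w - v₀ * E) 1 w := (hasDerivAt_id w).sub_const _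
    have hp : HasDerivAt (fun w : ℝ => (w - v₀ * E) ^ 2) (2 * (w - v₀ * E)) w := by
      have := h0.pow 2
      refine this.congr_deriv ?_
      norm_num
    have hp2 : HasDerivAt (fun w : ℝ => -(m / (2 * kT)) * (w - v₀ * E) ^ 2)
        (-(m / (2 * kT)) * (2 * (w - v₀ * E))) w := hp.const_mul _
    have hp3 := (hp2.div_const (1 - q)).exp
    have hp4 := hp3.const_mul A
    refine hp4.congr_deriv ?_
    ring
  -- first space derivative of w * g w
  have hwg : deriv (fun w => w *
      (A * Real.exp (-(m / (2 * kT)) * (w - v₀ * E) ^ 2 / (1 - q)))) v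
      = 1 * (A * Real.exp (-(m / (2 * kT)) * (v - v₀ * E) ^ 2 / (1 - q)))
        + v * (A * Real.exp (-(m / (2 * kT)) * (v - v₀ * E) ^ 2 / (1 - q))
          * (-(m / (2 * kT)) * (2 * (v - v₀ * E)) / (1 - q))) :=
    ((hasDerivAt_id v).mul (hgv v)).deriv
  rw [hwg]
  -- second space derivative
  have hd1 : deriv (fun w =>
      A * Real.exp (-(m / (2 * kT)) * (w - v₀ * E) ^ 2 / (1 - q)))
      = fun w => A * Real.exp (-(m / (2 * kT)) * (w - v₀ * E) ^ 2 / (1 - q))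
        * (-(m / (2 * kT)) * (2 * (w - v₀ * E)) / (1 - q)) := by
    funext w; exact (hgv w).deriv
  have hgv2 : HasDerivAt (fun w => A * Real.exp (-(m / (2 * kT)) * (w - v₀ * E) ^ 2 / (1 - q))
        * (-(m / (2 * kT)) * (2 * (w - v₀ * E)) / (1 - q)))
      ((A * Real.exp (-(m / (2 * kT)) * (v - v₀ * E) ^ 2 / (1 - q))
          * (-(m / (2 * kT)) * (2 * (v - v₀ * E)) / (1 - q)))
        * (-(m / (2 * kT)) * (2 * (v - v₀ * E)) / (1 - q))
        + A * Real.exp (-(m / (2 * kT)) * (v - v₀ * E) ^ 2 / (1 - q))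
          * (-(m / (2 * kT)) * 2 / (1 - q))) v := by
    have hlin2 : HasDerivAt (fun w : ℝ => -(m / (2 * kT)) * (2 * (w - v₀ * E)) / (1 - q))
        (-(m / (2 * kT)) * 2 / (1 - q)) v := by
      have h0 : HasDerivAt (fun w : ℝ => w - v₀ * E) 1 v := (hasDerivAt_id v).sub_const _
      have := ((h0.const_mul (2:ℝ)).const_mul (-(m / (2 * kT)))).div_const (1 - q)
      refine this.congr_deriv ?_
      ring
    exact (hgv v).mul hlin2
  have h2nd : iteratedDeriv 2 (fun w =>
      A * Real.exp (-(m / (2 * kT)) * (w - v₀ * E) ^ 2 / (1 - q))) v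
      = (A * Real.exp (-(m / (2 * kT)) * (v - v₀ * E) ^ 2 / (1 - q))
          * (-(m / (2 * kT)) * (2 * (v - v₀ * E)) / (1 - q)))
        * (-(m / (2 * kT)) * (2 * (v - v₀ * E)) / (1 - q))
        + A * Real.exp (-(m / (2 * kT)) * (v - v₀ * E) ^ 2 / (1 - q))
          * (-(m / (2 * kT)) * 2 / (1 - q)) := by
    rw [show (2:ℕ) = 1 + 1 from rfl, iteratedDeriv_succ, iteratedDeriv_one, hd1]
    exact hgv2.deriv
  rw [h2nd, ← hq, ← hE, ← hA]
  set X := Real.exp (-(m / (2 * kT)) * (v - v₀ * E) ^ 2 / (1 - q)) with hXdef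
  subst hγ
  field_simp
  ring
end

section
/- Let m > 0, k_B T > 0, β > 0, x₀, v₀ ∈ ℝ, and set g(t) = 2βt − 3 + 4e^{−βt} − e^{−2βt}. Define, for t > 0 and x ∈ ℝ, f(x,t) = √( mβ² / (2π k_B T · g(t)) ) · exp( −(mβ²/(2k_BT)) · ( x − x₀ − (v₀/β)(1 − e^{−βt}) )² / g(t) ). Then f satisfies the Ornstein–van Wijk Fokker–Planck equation for the displacement: for all x ∈ ℝ and t > 0, ∂f/∂t = (1 − e^{−βt})² · (k_BT/(mβ)) · ∂²f/∂x² − v₀ e^{−βt} · ∂f/∂x. -/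
open Real

private lemma expDeriv (c t : ℝ) :
    HasDerivAt (fun s => Real.exp (c * s)) (c * Real.exp (c * t)) t := by
  simpa [mul_comm] using HasDerivAt.exp ((hasDerivAt_id t).const_mul c)

private lemma hasDerivAt_G (β t : ℝ) :
    HasDerivAt (fun s => 2*β*s - 3 + 4*Real.exp (-β*s) - Real.exp (-2*β*s))
      (2*β - 4*β*Real.exp (-β*t) + 2*β*Real.exp (-2*β*t)) t := by
  have h1 : HasDerivAt (fun s : ℝ => 2*β*s) (2*β) t := by
    simpa using (hasDerivAt_id t).const_mul (2*β)
  have h2 := (expDeriv (-β) t).const_mul 4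
  have h3 := expDeriv (-2*β) t
  refine (((h1.sub_const 3).add h2).sub h3).congr_deriv ?_
  ring

private lemma g_pos {β : ℝ} (hβ : 0 < β) {t : ℝ} (ht : 0 < t) :
    0 < 2*β*t - 3 + 4*Real.exp (-β*t) - Real.exp (-2*β*t) := by
  have hmono : StrictMonoOn
      (fun s => 2*β*s - 3 + 4*Real.exp (-β*s) - Real.exp (-2*β*s)) (Set.Ici (0:ℝ)) := by
    apply strictMonoOn_of_deriv_pos (convex_Ici 0)
    · fun_prop
    · intro s hs
      rw [interior_Ici, Set.mem_Ioi] at hs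
      rw [(hasDerivAt_G β s).deriv]
      have hp1 : Real.exp (-β*s) < 1 := Real.exp_lt_one_iff.mpr (by nlinarith)
      have hp0 : 0 < Real.exp (-β*s) := Real.exp_pos _
      have h2 : Real.exp (-2*β*s) = Real.exp (-β*s)^2 := by
        rw [sq, ← Real.exp_add]; ring_nf
      rw [h2]
      nlinarith [mul_pos hβ (mul_pos (sub_pos.mpr hp1) (sub_pos.mpr hp1))]
  have h0 := hmono Set.self_mem_Ici (Set.mem_Ici.mpr ht.le) ht
  norm_num at h0
  ring_nf at h0 ⊢
  linarith

private lemma gaussDeriv (S A q b c y : ℝ) :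
    HasDerivAt (fun z => S * Real.exp (-A * (z - b - c)^2 / q))
      ((S * Real.exp (-A * (y - b - c)^2 / q)) * (-(2*A) * (y - b - c) / q)) y := by
  have h0 : HasDerivAt (fun z : ℝ => z - b - c) 1 y :=
    ((hasDerivAt_id y).sub_const b).sub_const c
  have h1 := (((h0.pow 2).const_mul (-A)).div_const q).exp.const_mul S
  refine h1.congr_deriv ?_
  push_cast [Pi.pow_apply]
  ring

/-- The Ornstein–van Wijk Fokker–Planck equation for the displacement: with
`g(t) = 2βt − 3 + 4e^{−βt} − e^{−2βt}`, the Ornstein–Uhlenbeck transition density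
`f(x,t) = √(mβ²/(2πk_BT·g(t))) · exp(−(mβ²/(2k_BT))(x − x₀ − (v₀/β)(1−e^{−βt}))²/g(t))`
satisfies `∂f/∂t = (1−e^{−βt})²·(k_BT/(mβ))·∂²f/∂x² − v₀e^{−βt}·∂f/∂x`
for all `x ∈ ℝ` and `t > 0`. -/
theorem ornstein_van_wijk_fokker_planck (m kT β x₀ v₀ : ℝ)
    (hm : 0 < m) (hkT : 0 < kT) (hβ : 0 < β)
    (g : ℝ → ℝ)
    (hg : ∀ t : ℝ, g t = 2 * β * t - 3 + 4 * Real.exp (-β * t) - Real.exp (-2 * β * t))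
    (f : ℝ → ℝ → ℝ)
    (hf : ∀ x t : ℝ, 0 < t →
      f x t = Real.sqrt (m * β ^ 2 / (2 * π * kT * g t)) *
        Real.exp (-(m * β ^ 2 / (2 * kT)) *
          (x - x₀ - v₀ / β * (1 - Real.exp (-β * t))) ^ 2 / g t)) :
    ∀ x t : ℝ, 0 < t →
      deriv (fun s => f x s) t
        = (1 - Real.exp (-β * t)) ^ 2 * (kT / (m * β)) * iteratedDeriv 2 (fun y => f y t) x
          - v₀ * Real.exp (-β * t) * deriv (fun y => f y t) x := by
  intro x t ht
  have hπ : 0 < π := Real.pi_pos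
  have hq : 0 < g t := by rw [hg]; exact g_pos hβ ht
  have hp0 : 0 < Real.exp (-β * t) := Real.exp_pos _
  have hinpos : 0 < m * β ^ 2 / (2 * π * kT * g t) := by positivity
  -- space function
  have hx1 : (fun y => f y t) = fun y => Real.sqrt (m * β ^ 2 / (2 * π * kT * g t)) *
      Real.exp (-(m * β ^ 2 / (2 * kT)) *
        (y - x₀ - v₀ / β * (1 - Real.exp (-β * t))) ^ 2 / g t) :=
    funext fun y => hf y t ht
  set S := Real.sqrt (m * β ^ 2 / (2 * π * kT * g t)) with hSdef
  set A := m * β ^ 2 / (2 * kT) with hAdef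
  set c := v₀ / β * (1 - Real.exp (-β * t)) with hcdef
  -- first space derivative
  have hD3 : deriv (fun y => f y t) x
      = (S * Real.exp (-A * (x - x₀ - c)^2 / g t)) * (-(2*A) * (x - x₀ - c) / g t) := by
    rw [hx1]
    exact (gaussDeriv S A (g t) x₀ c x).deriv
  -- second space derivative
  have hD2 : iteratedDeriv 2 (fun y => f y t) x
      = ((S * Real.exp (-A * (x - x₀ - c)^2 / g t)) * (-(2*A) * (x - x₀ - c) / g t))
          * (-(2*A) * (x - x₀ - c) / g t)
        + (S * Real.exp (-A * (x - x₀ - c)^2 / g t)) * (-(2*A) * 1 / g t) := by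
    rw [hx1, iteratedDeriv_succ, iteratedDeriv_one]
    have hd1 : deriv (fun y => S * Real.exp (-A * (y - x₀ - c)^2 / g t))
        = fun y => (S * Real.exp (-A * (y - x₀ - c)^2 / g t)) * (-(2*A) * (y - x₀ - c) / g t) :=
      funext fun y => (gaussDeriv S A (g t) x₀ c y).deriv
    rw [hd1]
    have hL : HasDerivAt (fun y : ℝ => -(2*A) * (y - x₀ - c) / g t) (-(2*A) * 1 / g t) x :=
      (((((hasDerivAt_id x).sub_const x₀).sub_const c)).const_mul (-(2*A))).div_const (g t)
    exact ((gaussDeriv S A (g t) x₀ c x).mul hL).deriv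
  -- time derivative
  have hgfun : g = fun s => 2*β*s - 3 + 4*Real.exp (-β*s) - Real.exp (-2*β*s) := funext hg
  have hp2 : Real.exp (-2*β*t) = Real.exp (-β*t) ^ 2 := by
    rw [sq, ← Real.exp_add]; ring_nf
  have hGd : HasDerivAt g (2*β*(1 - Real.exp (-β*t))^2) t := by
    rw [hgfun]
    convert hasDerivAt_G β t using 1
    rw [hp2]; ring
  have hx2 : (fun s => f x s) =ᶠ[nhds t] fun s =>
      Real.sqrt (m * β ^ 2 / (2 * π * kT * g s)) *
        Real.exp (-(m * β ^ 2 / (2 * kT)) *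
          (x - x₀ - v₀ / β * (1 - Real.exp (-β * s))) ^ 2 / g s) :=
    Filter.eventuallyEq_of_mem (isOpen_Ioi.mem_nhds ht) (fun s hs => hf x s hs)
  have hSd : HasDerivAt (fun s => Real.sqrt (m * β ^ 2 / (2 * π * kT * g s)))
      ((0 * (2 * π * kT * g t) - m * β ^ 2 * (2 * π * kT * (2*β*(1 - Real.exp (-β*t))^2)))
        / (2 * π * kT * g t) ^ 2 / (2 * S)) t := by
    exact ((hasDerivAt_const t (m * β ^ 2)).div (hGd.const_mul (2 * π * kT))
      (by positivity)).sqrt (ne_of_gt hinpos)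
  have hexp1 : HasDerivAt (fun s : ℝ => x - x₀ - v₀ / β * (1 - Real.exp (-β * s)))
      (0 - v₀ / β * (-((-β) * Real.exp (-β*t)))) t :=
    (hasDerivAt_const t (x - x₀)).sub (((expDeriv (-β) t).const_sub 1).const_mul (v₀ / β))
  have hw : HasDerivAt (fun s => -(m * β ^ 2 / (2 * kT)) *
      (x - x₀ - v₀ / β * (1 - Real.exp (-β * s))) ^ 2 / g s)
      (((-(m * β ^ 2 / (2 * kT)) * ((2:ℕ) * (x - x₀ - v₀ / β * (1 - Real.exp (-β * t))) ^ 1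
          * (0 - v₀ / β * (-((-β) * Real.exp (-β*t)))))) * g t
        - (-(m * β ^ 2 / (2 * kT)) * (x - x₀ - v₀ / β * (1 - Real.exp (-β * t))) ^ 2)
          * (2*β*(1 - Real.exp (-β*t))^2)) / g t ^ 2) t :=
    ((hexp1.pow 2).const_mul (-(m * β ^ 2 / (2 * kT)))).div hGd hq.ne'
  have hψ := hSd.mul hw.exp
  have hD1 := hx2.deriv_eq.trans hψ.deriv
  rw [hD1, hD2, hD3]
  rw [← hcdef, ← hAdef]
  have hS2 : S^2 = m * β ^ 2 / (2 * π * kT * g t) := Real.sq_sqrt hinpos.le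
  have hS0 : 0 < S := Real.sqrt_pos.mpr hinpos
  rw [← hSdef, hAdef]
  have hSd_eq : (0 * (2 * π * kT * g t) - m * β ^ 2 * (2 * π * kT * (2 * β * (1 - Real.exp (-β * t)) ^ 2)))
        / (2 * π * kT * g t) ^ 2 / (2 * S)
      = S * (-(2 * β * (1 - Real.exp (-β * t)) ^ 2) / (2 * g t)) := by
    rw [div_eq_iff (by positivity : (2*S : ℝ) ≠ 0),
      show S * (-(2*β*(1-Real.exp (-β*t))^2)/(2*g t)) * (2*S)
        = S^2 * (-(2*β*(1-Real.exp (-β*t))^2)/(g t)) by ring, hS2]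
    field_simp
    ring
  rw [hSd_eq]
  have h1 : g t ≠ 0 := hq.ne'
  have h2 : β ≠ 0 := hβ.ne'
  have h3 : kT ≠ 0 := hkT.ne'
  have h4 : m ≠ 0 := hm.ne'
  field_simp
  ring
end

section
/- Let (Ω, P) be a probability space, β > 0, and let W : [0,∞) → Ω → ℝ be a square-integrable process with E[W_a] = 0 for all a ≥ 0 and E[W_a · W_b] = min(a,b) for all a, b ≥ 0. Define X_t(ω) = (e^{−βt}/(2β)) · W(e^{2βt})(ω). Then for all s ≥ 0 and t ≥ 0, E[ (X_{s+t} − X_s)² ] = (1 − e^{−βt}) / (2β²). In particular E[(X_{s+t} − X_s)²] is of order t (not t²) as t → 0, so the process X has no derivative in the mean-square sense. -/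
open MeasureTheory Real

/-- Doob's increment-variance computation for the stationary Ornstein–Uhlenbeck velocity
process `X_t = (e^{−βt}/(2β))·W(e^{2βt})`, where `W` is a square-integrable process with
`E[W_a] = 0` and `E[W_a W_b] = min(a,b)` for `a, b ≥ 0`: for all `s ≥ 0` and `t ≥ 0`,
`E[(X_{s+t} − X_s)²] = (1 − e^{−βt})/(2β²)`; this is of order `t` (not `t²`) as `t → 0`,
so `X` has no derivative in the mean-square sense. -/
theorem ou_increment_variance
    {Ω : Type*} [MeasurableSpace Ω] (P : Measure Ω) [IsProbabilityMeasure P]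
    (β : ℝ) (hβ : 0 < β) (W : ℝ → Ω → ℝ)
    (hL2 : ∀ a : ℝ, 0 ≤ a → MemLp (W a) 2 P)
    (hmean : ∀ a : ℝ, 0 ≤ a → ∫ ω, W a ω ∂P = 0)
    (hcov : ∀ a b : ℝ, 0 ≤ a → 0 ≤ b → ∫ ω, W a ω * W b ω ∂P = min a b)
    (X : ℝ → Ω → ℝ)
    (hX : ∀ t ω, X t ω = Real.exp (-β * t) / (2 * β) * W (Real.exp (2 * β * t)) ω) :
    ∀ s t : ℝ, 0 ≤ s → 0 ≤ t →
      ∫ ω, (X (s + t) ω - X s ω) ^ 2 ∂P = (1 - Real.exp (-β * t)) / (2 * β ^ 2) := by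
  intro s t hs ht
  set a : ℝ := Real.exp (2 * β * s) with ha_def
  set b : ℝ := Real.exp (2 * β * (s + t)) with hb_def
  have ha : (0:ℝ) ≤ a := (Real.exp_pos _).le
  have hb : (0:ℝ) ≤ b := (Real.exp_pos _).le
  have hab : a ≤ b := Real.exp_le_exp.2 (by nlinarith)
  set c1 : ℝ := Real.exp (-β * (s + t)) / (2 * β) with hc1
  set c2 : ℝ := Real.exp (-β * s) / (2 * β) with hc2
  have imul : ∀ f g : Ω → ℝ, MemLp f 2 P → MemLp g 2 P →
      Integrable (fun ω => f ω * g ω) P := by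
    intro f g hf hg
    have h := hg.smul (p := 2) (q := 2) (r := 1) hf (hpqr := ⟨by
      simp [ENNReal.inv_two_add_inv_two]⟩)
    rw [memLp_one_iff_integrable] at h
    exact h
  have hIbb : Integrable (fun ω => W b ω * W b ω) P := imul _ _ (hL2 b hb) (hL2 b hb)
  have hIba : Integrable (fun ω => W b ω * W a ω) P := imul _ _ (hL2 b hb) (hL2 a ha)
  have hIaa : Integrable (fun ω => W a ω * W a ω) P := imul _ _ (hL2 a ha) (hL2 a ha)
  have key : ∀ ω, (X (s + t) ω - X s ω) ^ 2 =
      c1 ^ 2 * (W b ω * W b ω) - 2 * c1 * c2 * (W b ω * W a ω)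
        + c2 ^ 2 * (W a ω * W a ω) := by
    intro ω
    rw [hX, hX]
    ring
  rw [integral_congr_ae (Filter.Eventually.of_forall key)]
  have hsub : Integrable (fun ω => c1 ^ 2 * (W b ω * W b ω)
      - 2 * c1 * c2 * (W b ω * W a ω)) P := (hIbb.const_mul _).sub (hIba.const_mul _)
  rw [integral_add hsub (hIaa.const_mul _),
    integral_sub (hIbb.const_mul _) (hIba.const_mul _),
    integral_const_mul, integral_const_mul, integral_const_mul,
    hcov b b hb hb, hcov b a hb ha, hcov a a ha ha]
  rw [min_self, min_self, min_eq_right hab]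
  have hbne : (β : ℝ) ≠ 0 := ne_of_gt hβ
  have e1 : c1 ^ 2 * b = 1 / (4 * β ^ 2) := by
    rw [hc1, hb_def, div_pow, sq (Real.exp _), ← Real.exp_add, div_mul_eq_mul_div,
      ← Real.exp_add, show -β * (s + t) + -β * (s + t) + 2 * β * (s + t) = 0 by ring,
      Real.exp_zero]
    field_simp
    ring
  have e2 : c1 * c2 * a = Real.exp (-β * t) / (4 * β ^ 2) := by
    rw [hc1, hc2, ha_def, div_mul_div_comm, ← Real.exp_add, div_mul_eq_mul_div,
      ← Real.exp_add, show -β * (s + t) + -β * s + 2 * β * s = -β * t by ring]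
    field_simp
    ring
  have e3 : c2 ^ 2 * a = 1 / (4 * β ^ 2) := by
    rw [hc2, ha_def, div_pow, sq (Real.exp _), ← Real.exp_add, div_mul_eq_mul_div,
      ← Real.exp_add, show -β * s + -β * s + 2 * β * s = 0 by ring, Real.exp_zero]
    field_simp
    ring
  have : 2 * c1 * c2 * a = 2 * (c1 * c2 * a) := by ring
  rw [this, e1, e2, e3]
  field_simp
  ring
end
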